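/- arXiv:1504.07756 — 10 statements merged into one kernel-verified Lean document; each statement's English description precedes it below -/
import Mathlib

section
/- Let H₁, H₂, K₁, K₂ be complex Hilbert spaces, let j₁ : H₁ → K₁ and j₂ : H₂ → K₂ be linear isometries (regarded as continuous linear maps, with Hilbert-space adjoints j₁†, j₂†), and let T : H₁ →L[ℂ] H₂ and T' : K₁ →L[ℂ] K₂ be continuous linear maps such that T' ∘ j₁ = j₂ ∘ T and T' ∘ (j₁ ∘ j₁†) = (j₂ ∘ j₂†) ∘ T'. Then the adjoints satisfy (T')† ∘ j₂ = j₁ ∘ T†. -/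
open ContinuousLinearMap

lemma adjoint_comp_isometry
    {H K : Type*}
    [NormedAddCommGroup H] [InnerProductSpace ℂ H] [CompleteSpace H]
    [NormedAddCommGroup K] [InnerProductSpace ℂ K] [CompleteSpace K]
    (j : H →ₗᵢ[ℂ] K) :
    adjoint j.toContinuousLinearMap ∘L j.toContinuousLinearMap = 1 := by
  ext x
  refine ext_inner_right ℂ fun y => ?_
  simp [adjoint_inner_left, j.inner_map_map]

/-- **Adjoints of inductive systems of operators (equations (2.5)–(2.6)).**
If `T' ∘ j₁ = j₂ ∘ T` and `T'` commutes with the orthogonal projections `jᵢ ∘ jᵢ†` onto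
the ranges of the isometric embeddings `jᵢ`, then the adjoints satisfy
`(T')† ∘ j₂ = j₁ ∘ T†`. -/
theorem adjoint_of_inductive_system
    {H₁ H₂ K₁ K₂ : Type*}
    [NormedAddCommGroup H₁] [InnerProductSpace ℂ H₁] [CompleteSpace H₁]
    [NormedAddCommGroup H₂] [InnerProductSpace ℂ H₂] [CompleteSpace H₂]
    [NormedAddCommGroup K₁] [InnerProductSpace ℂ K₁] [CompleteSpace K₁]
    [NormedAddCommGroup K₂] [InnerProductSpace ℂ K₂] [CompleteSpace K₂]
    (j₁ : H₁ →ₗᵢ[ℂ] K₁) (j₂ : H₂ →ₗᵢ[ℂ] K₂)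
    (T : H₁ →L[ℂ] H₂) (T' : K₁ →L[ℂ] K₂)
    (h₁ : T' ∘L j₁.toContinuousLinearMap = j₂.toContinuousLinearMap ∘L T)
    (h₂ : T' ∘L (j₁.toContinuousLinearMap ∘L adjoint j₁.toContinuousLinearMap) =
        (j₂.toContinuousLinearMap ∘L adjoint j₂.toContinuousLinearMap) ∘L T') :
    adjoint T' ∘L j₂.toContinuousLinearMap = j₁.toContinuousLinearMap ∘L adjoint T := by
  set J₁ := j₁.toContinuousLinearMap
  set J₂ := j₂.toContinuousLinearMap
  have ja₁ : adjoint J₁ ∘L J₁ = 1 := adjoint_comp_isometry j₁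
  have ja₂ : adjoint J₂ ∘L J₂ = 1 := adjoint_comp_isometry j₂
  -- adjoint of h₁
  have h₁' : adjoint J₁ ∘L adjoint T' = adjoint T ∘L adjoint J₂ := by
    have := congrArg adjoint h₁
    simpa [adjoint_comp] using this
  -- adjoint of h₂
  have h₂' : (J₁ ∘L adjoint J₁) ∘L adjoint T' = adjoint T' ∘L (J₂ ∘L adjoint J₂) := by
    have := congrArg adjoint h₂
    simpa [adjoint_comp, comp_assoc] using this
  have key : adjoint J₁ ∘L (adjoint T' ∘L J₂) = adjoint T := by
    rw [← comp_assoc, h₁', comp_assoc, ja₂]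
    ext x; simp
  calc adjoint T' ∘L J₂
      = adjoint T' ∘L ((J₂ ∘L adjoint J₂) ∘L J₂) := by
        rw [comp_assoc, ja₂]; ext x; simp
    _ = (adjoint T' ∘L (J₂ ∘L adjoint J₂)) ∘L J₂ := by ext x; simp
    _ = ((J₁ ∘L adjoint J₁) ∘L adjoint T') ∘L J₂ := by rw [h₂']
    _ = J₁ ∘L (adjoint J₁ ∘L (adjoint T' ∘L J₂)) := by ext x; simp
    _ = J₁ ∘L adjoint T := by rw [key]
end

section
/- Let (E, Λ, p) be a locally Hilbert space model and let T ∈ 𝓛(E). Then there exists a unique map S ∈ 𝓛(E) such that ⟨T x, y⟩ = ⟨x, S y⟩ for all x, y ∈ E; moreover, for every λ ∈ Λ the restriction of S to p λ equals the Hilbert-space adjoint of the restriction T_λ : p λ → p λ. -/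
/-!
If `y ∈ p l`, then `⟪T x, y⟫ = ⟪x, (T_l)* y⟫` holds for every `x ∈ E`, not only for `x ∈ p l`:
since `T` commutes with `P_l`, one can pass `x` through `P_l` on both sides. Hence the vector
`(T_l)* y` is pinned down by `y` alone, whichever `l` with `y ∈ p l` is used, and these vectors
form the adjoint `S`. Linearity of `S`, its commuting with the projections and its uniqueness
all follow from the same inner-product characterisation.
-/

open scoped InnerProductSpace

/-- The orthogonal projection of an inner product space onto a complete submodule,
viewed as a continuous linear map of the ambient space into itself. -/
noncomputable def projL {E : Type*} [NormedAddCommGroup E] [InnerProductSpace ℂ E]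
    (K : Submodule ℂ E) [CompleteSpace K] : E →L[ℂ] E :=
  K.subtypeL.comp K.orthogonalProjectionOnto

/-- An element of `𝓛(E)` for the locally Hilbert space model determined by the family `p`:
a linear map on `E` leaving each `p l` invariant, whose restriction to each `p l` is a
continuous (bounded) operator, and which commutes with each orthogonal projection `projL (p l)`. -/
structure LocOp {E : Type*} [NormedAddCommGroup E] [InnerProductSpace ℂ E]
    {Λ : Type*} (p : Λ → Submodule ℂ E) [∀ l, CompleteSpace (p l)] where
  toFun : E →ₗ[ℂ] E
  restr : ∀ l, p l →L[ℂ] p l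
  restr_eq : ∀ l (x : p l), (restr l x : E) = toFun x
  proj_comm : ∀ l (x : E), toFun (projL (p l) x) = projL (p l) (toFun x)

section

variable {𝕜 E F : Type*} [RCLike 𝕜] [NormedAddCommGroup E] [InnerProductSpace 𝕜 E]
  [NormedAddCommGroup F] [InnerProductSpace 𝕜 F]

def LinearMap.ofIsAdjoint (T : E →ₗ[𝕜] F) (g : F → E) (hg : ∀ x y, ⟪T x, y⟫_𝕜 = ⟪x, g y⟫_𝕜) :
    F →ₗ[𝕜] E where
  toFun := g
  map_add' y z := ext_inner_left 𝕜 fun x => by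
    rw [inner_add_right, ← hg, ← hg, ← hg, inner_add_right]
  map_smul' c y := ext_inner_left 𝕜 fun x => by
    rw [RingHom.id_apply, inner_smul_right, ← hg, ← hg, inner_smul_right]

end

section

variable {E : Type*} [NormedAddCommGroup E] [InnerProductSpace ℂ E]

theorem projL_eq_starProjection (K : Submodule ℂ E) [CompleteSpace K] :
    projL K = K.starProjection :=
  rfl

namespace LocOp

variable {Λ : Type*} {p : Λ → Submodule ℂ E} [∀ l, CompleteSpace (p l)]

theorem inner_toFun_eq_inner_adjoint_restr (T : LocOp p) (l : Λ) (x : E) (y : p l) :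
    ⟪T.toFun x, y⟫_ℂ = ⟪x, (ContinuousLinearMap.adjoint (T.restr l) y : E)⟫_ℂ := by
  have hy : (p l).starProjection y = y := (Submodule.starProjection_eq_self_iff).2 y.2
  set a := ContinuousLinearMap.adjoint (T.restr l) y
  have ha : (p l).starProjection a = a := (Submodule.starProjection_eq_self_iff).2 a.2
  set Px : p l := (p l).orthogonalProjectionOnto x
  calc ⟪T.toFun x, y⟫_ℂ = ⟪(p l).starProjection (T.toFun x), y⟫_ℂ := by
        rw [Submodule.inner_starProjection_left_eq_right, hy]
    _ = ⟪(T.restr l Px : E), y⟫_ℂ := by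
        rw [T.restr_eq, ← projL_eq_starProjection, ← T.proj_comm]; rfl
    _ = ⟪(Px : E), a⟫_ℂ := by
        rw [← Submodule.coe_inner, ← ContinuousLinearMap.adjoint_inner_right, Submodule.coe_inner]
    _ = ⟪x, a⟫_ℂ := by
        rw [← Submodule.starProjection_apply, Submodule.inner_starProjection_left_eq_right, ha]

theorem adjoint_restr_eq_of_mem (T : LocOp p) {l μ : Λ} {y : E} (hl : y ∈ p l) (hμ : y ∈ p μ) :
    (ContinuousLinearMap.adjoint (T.restr l) ⟨y, hl⟩ : E) =
      ContinuousLinearMap.adjoint (T.restr μ) ⟨y, hμ⟩ :=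
  ext_inner_left ℂ fun x => by
    rw [← inner_toFun_eq_inner_adjoint_restr, ← inner_toFun_eq_inner_adjoint_restr]

variable (hexh : ∀ x : E, ∃ l, x ∈ p l)

noncomputable def adjointFun (T : LocOp p) (y : E) : E :=
  ContinuousLinearMap.adjoint (T.restr (hexh y).choose) ⟨y, (hexh y).choose_spec⟩

theorem inner_toFun_eq_inner_adjointFun (T : LocOp p) (x y : E) :
    ⟪T.toFun x, y⟫_ℂ = ⟪x, T.adjointFun hexh y⟫_ℂ :=
  T.inner_toFun_eq_inner_adjoint_restr _ x ⟨y, (hexh y).choose_spec⟩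

theorem adjointFun_eq_adjoint_restr (T : LocOp p) {l : Λ} {y : E} (hy : y ∈ p l) :
    T.adjointFun hexh y = ContinuousLinearMap.adjoint (T.restr l) ⟨y, hy⟩ :=
  T.adjoint_restr_eq_of_mem _ hy

theorem adjointFun_projL (T : LocOp p) (l : Λ) (y : E) :
    T.adjointFun hexh (projL (p l) y) = projL (p l) (T.adjointFun hexh y) :=
  ext_inner_left ℂ fun x => by
    rw [← inner_toFun_eq_inner_adjointFun, projL_eq_starProjection,
      ← Submodule.inner_starProjection_left_eq_right, ← projL_eq_starProjection, ← T.proj_comm,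
      inner_toFun_eq_inner_adjointFun, projL_eq_starProjection,
      Submodule.inner_starProjection_left_eq_right]

noncomputable def adjoint (T : LocOp p) : LocOp p where
  toFun := .ofIsAdjoint T.toFun (T.adjointFun hexh) (T.inner_toFun_eq_inner_adjointFun hexh)
  restr l := ContinuousLinearMap.adjoint (T.restr l)
  restr_eq _ y := (T.adjointFun_eq_adjoint_restr hexh y.2).symm
  proj_comm := T.adjointFun_projL hexh

theorem inner_toFun_eq_inner_adjoint (T : LocOp p) (x y : E) :
    ⟪T.toFun x, y⟫_ℂ = ⟪x, (T.adjoint hexh).toFun y⟫_ℂ :=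
  T.inner_toFun_eq_inner_adjointFun hexh x y

theorem toFun_eq_adjoint_toFun (T S : LocOp p)
    (hS : ∀ x y : E, ⟪T.toFun x, y⟫_ℂ = ⟪x, S.toFun y⟫_ℂ) :
    S.toFun = (T.adjoint hexh).toFun :=
  LinearMap.ext fun y => ext_inner_left ℂ fun x => by
    rw [← hS, inner_toFun_eq_inner_adjoint]

end LocOp

end

theorem locOp_exists_unique_adjoint_general
    {E : Type*} [NormedAddCommGroup E] [InnerProductSpace ℂ E]
    {Λ : Type*}
    (p : Λ → Submodule ℂ E) [∀ l, CompleteSpace (p l)]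
    (hexh : ∀ x : E, ∃ l, x ∈ p l)
    (T : LocOp p) :
    ∃ S : LocOp p,
      (∀ x y : E, ⟪T.toFun x, y⟫_ℂ = ⟪x, S.toFun y⟫_ℂ) ∧
      (∀ l, S.restr l = ContinuousLinearMap.adjoint (T.restr l)) ∧
      (∀ S' : LocOp p, (∀ x y : E, ⟪T.toFun x, y⟫_ℂ = ⟪x, S'.toFun y⟫_ℂ) →
        S'.toFun = S.toFun) :=
  ⟨T.adjoint hexh, T.inner_toFun_eq_inner_adjoint hexh, fun _ => rfl,
    T.toFun_eq_adjoint_toFun hexh⟩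

/-- **Existence and uniqueness of the adjoint in `𝓛(ℍ)`.**  For a locally Hilbert space
model `(E, Λ, p)` and `T ∈ 𝓛(E)` there is a unique `S ∈ 𝓛(E)` with
`⟪T x, y⟫ = ⟪x, S y⟫` for all `x y`, and the restriction of `S` to each `p l` is the
Hilbert-space adjoint of the restriction of `T`. -/
theorem locOp_exists_unique_adjoint
    {E : Type*} [NormedAddCommGroup E] [InnerProductSpace ℂ E]
    {Λ : Type*} [PartialOrder Λ] [IsDirected Λ (· ≤ ·)]
    (p : Λ → Submodule ℂ E) [∀ l, CompleteSpace (p l)]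
    (hmono : Monotone p) (hexh : ∀ x : E, ∃ l, x ∈ p l)
    (T : LocOp p) :
    ∃ S : LocOp p,
      (∀ x y : E, ⟪T.toFun x, y⟫_ℂ = ⟪x, S.toFun y⟫_ℂ) ∧
      (∀ l, S.restr l = ContinuousLinearMap.adjoint (T.restr l)) ∧
      (∀ S' : LocOp p, (∀ x y : E, ⟪T.toFun x, y⟫_ℂ = ⟪x, S'.toFun y⟫_ℂ) →
        S'.toFun = S.toFun) :=
  locOp_exists_unique_adjoint_general p hexh T
end

section
/- Let (E, Λ, p) be a locally Hilbert space model and let T ∈ 𝓛(E). Then ⟨T x, y⟩ = ⟨x, T y⟩ holds for all x, y ∈ E if and only if for every λ ∈ Λ the restriction T_λ : p λ → p λ is a self-adjoint bounded operator on the Hilbert space p λ. -/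
open scoped InnerProductSpace

theorem Submodule.exists_mem_mem_of_directed_of_exhaustive {ι R M : Type*} [Preorder ι]
    [IsDirected ι (· ≤ ·)] [Semiring R] [AddCommMonoid M] [Module R M]
    {p : ι → Submodule R M} (hmono : Monotone p) (hexh : ∀ x : M, ∃ l, x ∈ p l) (x y : M) :
    ∃ n, x ∈ p n ∧ y ∈ p n := by
  obtain ⟨l, hl⟩ := hexh x
  obtain ⟨m, hm⟩ := hexh y
  obtain ⟨n, hln, hmn⟩ := directed_of (· ≤ ·) l m
  exact ⟨n, hmono hln hl, hmono hmn hm⟩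

namespace LocOp

variable {E : Type*} [NormedAddCommGroup E] [InnerProductSpace ℂ E] {Λ : Type*}
  {p : Λ → Submodule ℂ E} [∀ l, CompleteSpace (p l)]

theorem isSelfAdjoint_restr_iff (T : LocOp p) (l : Λ) :
    IsSelfAdjoint (T.restr l) ↔
      ∀ x ∈ p l, ∀ y ∈ p l, ⟪T.toFun x, y⟫_ℂ = ⟪x, T.toFun y⟫_ℂ := by
  rw [ContinuousLinearMap.isSelfAdjoint_iff_isSymmetric]
  refine ⟨fun h x hx y hy => ?_, fun h x y => ?_⟩
  · simpa only [Submodule.coe_inner, ContinuousLinearMap.coe_coe, T.restr_eq] using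
      h ⟨x, hx⟩ ⟨y, hy⟩
  · simpa only [Submodule.coe_inner, ContinuousLinearMap.coe_coe, T.restr_eq] using
      h x x.2 y y.2

end LocOp

/-- **Proposition 2.1 (i).**  An operator `T ∈ 𝓛(E)` on a locally Hilbert space model
`(E, Λ, p)` is locally self-adjoint (`⟪T x, y⟫ = ⟪x, T y⟫` for all `x, y ∈ E`) iff each
restriction `T_λ : p λ → p λ` is a self-adjoint bounded operator on the Hilbert space `p λ`. -/
theorem locOp_selfAdjoint_iff
    {E : Type*} [NormedAddCommGroup E] [InnerProductSpace ℂ E]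
    {Λ : Type*} [PartialOrder Λ] [IsDirected Λ (· ≤ ·)]
    (p : Λ → Submodule ℂ E) [∀ l, CompleteSpace (p l)]
    (hmono : Monotone p) (hexh : ∀ x : E, ∃ l, x ∈ p l)
    (T : LocOp p) :
    (∀ x y : E, ⟪T.toFun x, y⟫_ℂ = ⟪x, T.toFun y⟫_ℂ) ↔
      ∀ l, IsSelfAdjoint (T.restr l) := by
  simp only [T.isSelfAdjoint_restr_iff]
  refine ⟨fun h l x _ y _ => h x y, fun h x y => ?_⟩
  obtain ⟨n, hx, hy⟩ := Submodule.exists_mem_mem_of_directed_of_exhaustive hmono hexh x y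
  exact h n x hx y hy
end

section
/- Let (E, Λ, p) and (F, Λ, q) be locally Hilbert space models over the same directed index set Λ and let V ∈ 𝓛(E, F). Then V is surjective and satisfies ⟨V x, V y⟩ = ⟨x, y⟩ for all x, y ∈ E if and only if for every λ ∈ Λ the restriction V_λ : p λ → q λ is a unitary operator between the Hilbert spaces p λ and q λ (i.e. a surjective linear map preserving inner products). -/
open scoped InnerProductSpace

/-- An element of `𝓛(E, F)` for two locally Hilbert space models `(E, Λ, p)` and `(F, Λ, q)`
over the same index set: a linear map `E → F` mapping each `p l` into `q l`, whose
restrictions `p l → q l` are continuous (bounded) operators, and which intertwines the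
orthogonal projections `projL (p l)` and `projL (q l)`. -/
structure LocOpPair {E F : Type*} [NormedAddCommGroup E] [InnerProductSpace ℂ E]
    [NormedAddCommGroup F] [InnerProductSpace ℂ F]
    {Λ : Type*} (p : Λ → Submodule ℂ E) (q : Λ → Submodule ℂ F)
    [∀ l, CompleteSpace (p l)] [∀ l, CompleteSpace (q l)] where
  toFun : E →ₗ[ℂ] F
  restr : ∀ l, p l →L[ℂ] q l
  restr_eq : ∀ l (x : p l), (restr l x : F) = toFun x
  proj_comm : ∀ l (x : E), toFun (projL (p l) x) = projL (q l) (toFun x)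

section projL

variable {E : Type*} [NormedAddCommGroup E] [InnerProductSpace ℂ E]
  (K : Submodule ℂ E) [CompleteSpace K]

theorem projL_apply_mem (x : E) : projL K x ∈ K :=
  (K.orthogonalProjectionOnto x).2

theorem projL_apply_of_mem {y : E} (hy : y ∈ K) : projL K y = y :=
  congrArg Subtype.val (K.orthogonalProjectionOnto_mem_subspace_eq_self ⟨y, hy⟩)

end projL

theorem Monotone.exists_mem_both {R E Λ : Type*} [Semiring R] [AddCommMonoid E] [Module R E]
    [Preorder Λ] [IsDirected Λ (· ≤ ·)] {p : Λ → Submodule R E} (hmono : Monotone p)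
    (hexh : ∀ x : E, ∃ l, x ∈ p l) (x y : E) : ∃ l, x ∈ p l ∧ y ∈ p l := by
  obtain ⟨l, hl⟩ := hexh x
  obtain ⟨m, hm⟩ := hexh y
  obtain ⟨n, hln, hmn⟩ := directed_of (· ≤ ·) l m
  exact ⟨n, hmono hln hl, hmono hmn hm⟩

namespace LocOpPair

variable {E F : Type*} [NormedAddCommGroup E] [InnerProductSpace ℂ E]
  [NormedAddCommGroup F] [InnerProductSpace ℂ F]
  {Λ : Type*} {p : Λ → Submodule ℂ E} {q : Λ → Submodule ℂ F}
  [∀ l, CompleteSpace (p l)] [∀ l, CompleteSpace (q l)] (V : LocOpPair p q)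

theorem inner_restr (l : Λ) (x y : p l) :
    ⟪V.restr l x, V.restr l y⟫_ℂ = ⟪V.toFun x, V.toFun y⟫_ℂ := by
  rw [Submodule.coe_inner, V.restr_eq, V.restr_eq]

theorem restr_surjective (hV : Function.Surjective V.toFun) (l : Λ) :
    Function.Surjective (V.restr l) := by
  rintro ⟨y, hy⟩
  obtain ⟨x, rfl⟩ := hV y
  -- `P_l x` is a preimage in `p l`: `V (P_l x) = Q_l (V x) = V x` as `V x ∈ q l`.
  refine ⟨⟨projL (p l) x, projL_apply_mem _ x⟩, Subtype.ext ?_⟩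
  rw [V.restr_eq, V.proj_comm, projL_apply_of_mem _ hy]

theorem surjective_of_restr_surjective (hexh : ∀ y : F, ∃ l, y ∈ q l)
    (h : ∀ l, Function.Surjective (V.restr l)) : Function.Surjective V.toFun := by
  intro y
  obtain ⟨l, hl⟩ := hexh y
  obtain ⟨x, hx⟩ := h l ⟨y, hl⟩
  exact ⟨x, by rw [← V.restr_eq, hx]⟩

theorem inner_map_map_of_restr [Preorder Λ] [IsDirected Λ (· ≤ ·)] (hmono : Monotone p)
    (hexh : ∀ x : E, ∃ l, x ∈ p l)
    (h : ∀ l (x y : p l), ⟪V.restr l x, V.restr l y⟫_ℂ = ⟪x, y⟫_ℂ) (x y : E) :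
    ⟪V.toFun x, V.toFun y⟫_ℂ = ⟪x, y⟫_ℂ := by
  obtain ⟨l, hx, hy⟩ := hmono.exists_mem_both hexh x y
  rw [← Submodule.coe_inner (p l) ⟨x, hx⟩ ⟨y, hy⟩, ← h l, inner_restr]

end LocOpPair

theorem locOpPair_unitary_iff_general
    {E F : Type*} [NormedAddCommGroup E] [InnerProductSpace ℂ E]
    [NormedAddCommGroup F] [InnerProductSpace ℂ F]
    {Λ : Type*} [PartialOrder Λ] [IsDirected Λ (· ≤ ·)]
    (p : Λ → Submodule ℂ E) (q : Λ → Submodule ℂ F)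
    [∀ l, CompleteSpace (p l)] [∀ l, CompleteSpace (q l)]
    (hmonop : Monotone p) (hexhp : ∀ x : E, ∃ l, x ∈ p l)
    (hexhq : ∀ y : F, ∃ l, y ∈ q l)
    (V : LocOpPair p q) :
    (Function.Surjective V.toFun ∧
        ∀ x y : E, ⟪V.toFun x, V.toFun y⟫_ℂ = ⟪x, y⟫_ℂ) ↔
      ∀ l, Function.Surjective (V.restr l) ∧
        ∀ x y : p l, ⟪V.restr l x, V.restr l y⟫_ℂ = ⟪x, y⟫_ℂ := by
  constructor
  · rintro ⟨hsurj, hinner⟩ l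
    exact ⟨V.restr_surjective hsurj l,
      fun x y => by rw [V.inner_restr, hinner, Submodule.coe_inner]⟩
  · intro h
    exact ⟨V.surjective_of_restr_surjective hexhq fun l => (h l).1,
      V.inner_map_map_of_restr hmonop hexhp fun l => (h l).2⟩

/-- **Theorem 2.2 (iv).**  `V ∈ 𝓛(E, F)` is a locally unitary operator (surjective and
inner-product preserving) iff each restriction `V_λ : p λ → q λ` is a unitary operator
between the Hilbert spaces `p λ` and `q λ`. -/
theorem locOpPair_unitary_iff
    {E F : Type*} [NormedAddCommGroup E] [InnerProductSpace ℂ E]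
    [NormedAddCommGroup F] [InnerProductSpace ℂ F]
    {Λ : Type*} [PartialOrder Λ] [IsDirected Λ (· ≤ ·)]
    (p : Λ → Submodule ℂ E) (q : Λ → Submodule ℂ F)
    [∀ l, CompleteSpace (p l)] [∀ l, CompleteSpace (q l)]
    (hmonop : Monotone p) (hexhp : ∀ x : E, ∃ l, x ∈ p l)
    (hmonoq : Monotone q) (hexhq : ∀ y : F, ∃ l, y ∈ q l)
    (V : LocOpPair p q) :
    (Function.Surjective V.toFun ∧
        ∀ x y : E, ⟪V.toFun x, V.toFun y⟫_ℂ = ⟪x, y⟫_ℂ) ↔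
      ∀ l, Function.Surjective (V.restr l) ∧
        ∀ x y : p l, ⟪V.restr l x, V.restr l y⟫_ℂ = ⟪x, y⟫_ℂ :=
  locOpPair_unitary_iff_general p q hmonop hexhp hexhq V
end

section
/- Let H be a complex Hilbert space, S an arbitrary set, and Γ : S → S → (H →L[ℂ] H) a kernel. The following are equivalent: (i) for every function T : S → (H →L[ℂ] H) which is zero outside a finite set, the operator ∑_{s,t} (T t)† ∘ (Γ s t) ∘ (T s) is positive, i.e. ⟨(∑_{s,t} (T t)† ∘ (Γ s t) ∘ (T s)) x, x⟩ is a nonnegative real number for every x ∈ H; (ii) for every function h : S → H which is zero outside a finite set, the sum ∑_{s,t} ⟨(Γ s t) (h s), h t⟩ is a nonnegative real number (zero imaginary part and nonnegative real part). -/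
open ContinuousLinearMap
open scoped InnerProductSpace

private lemma sum_inner_eq_aux
    {H : Type*} [NormedAddCommGroup H] [InnerProductSpace ℂ H] [CompleteSpace H]
    {S : Type*} (Γ : S → S → (H →L[ℂ] H)) (A : Finset S) (T : S → (H →L[ℂ] H)) (x : H) :
    ⟪(∑ s ∈ A, ∑ t ∈ A, adjoint (T t) ∘L (Γ s t) ∘L (T s)) x, x⟫_ℂ
      = ∑ s ∈ A, ∑ t ∈ A, ⟪(Γ s t) (T s x), T t x⟫_ℂ := by
  simp only [ContinuousLinearMap.sum_apply, sum_inner, comp_apply, adjoint_inner_left]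

/-- **Theorem 3.1 / Corollary 3.3 (single Hilbert space).**  A `B(H)`-valued kernel `Γ` on a
set `S` is positive definite in the operator sense (for every finitely supported
operator-valued function `T` the operator `∑_{s,t} (T t)† ∘ Γ s t ∘ T s` is positive) iff
it is positive definite in the vector sense (for every finitely supported `h : S → H` the
sum `∑_{s,t} ⟪Γ s t (h s), h t⟫` is a nonnegative real number). -/
theorem kernel_operator_posDef_iff_vector_posDef
    {H : Type*} [NormedAddCommGroup H] [InnerProductSpace ℂ H] [CompleteSpace H]
    {S : Type*} (Γ : S → S → (H →L[ℂ] H)) :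
    (∀ T : S →₀ (H →L[ℂ] H), ∀ x : H,
        0 ≤ (⟪(∑ s ∈ T.support, ∑ t ∈ T.support,
              adjoint (T t) ∘L (Γ s t) ∘L (T s)) x, x⟫_ℂ).re ∧
        (⟪(∑ s ∈ T.support, ∑ t ∈ T.support,
              adjoint (T t) ∘L (Γ s t) ∘L (T s)) x, x⟫_ℂ).im = 0) ↔
      (∀ h : S →₀ H,
        0 ≤ (∑ s ∈ h.support, ∑ t ∈ h.support, ⟪(Γ s t) (h s), h t⟫_ℂ).re ∧
        (∑ s ∈ h.support, ∑ t ∈ h.support, ⟪(Γ s t) (h s), h t⟫_ℂ).im = 0) := by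
  constructor
  · intro hyp h
    rcases eq_or_ne h 0 with rfl | hne
    · simp
    obtain ⟨s₀, hs₀⟩ := Finsupp.support_nonempty_iff.mpr hne
    set x : H := h s₀ with hx
    have hx0 : x ≠ 0 := Finsupp.mem_support_iff.mp hs₀
    have hxx : ⟪x, x⟫_ℂ ≠ 0 := inner_self_ne_zero.mpr hx0
    have hinj : Function.Injective
        (fun v : H => ContinuousLinearMap.smulRight (innerSL ℂ x) v) := by
      intro a b hab
      have h2 := congrArg (fun (f : H →L[ℂ] H) => f x) hab
      simp only [ContinuousLinearMap.smulRight_apply] at h2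
      exact smul_right_injective H hxx h2
    set T : S →₀ (H →L[ℂ] H) :=
      h.mapRange (fun v => ContinuousLinearMap.smulRight (innerSL ℂ x) v)
        (by ext y; simp) with hT
    have hTs : ∀ s, T s = ContinuousLinearMap.smulRight (innerSL ℂ x) (h s) := by
      intro s; simp [hT]
    have hsupp : T.support = h.support :=
      Finsupp.support_mapRange_of_injective _ _ hinj
    obtain ⟨h1, h2⟩ := hyp T x
    rw [sum_inner_eq_aux, hsupp] at h1 h2
    have hterm : ∀ s t, ⟪(Γ s t) (T s x), T t x⟫_ℂ
        = (‖x‖ ^ 4 : ℝ) * ⟪(Γ s t) (h s), h t⟫_ℂ := by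
      intro s t
      rw [hTs, hTs]
      simp only [ContinuousLinearMap.smulRight_apply, innerSL_apply_apply, map_smul,
        inner_smul_left, inner_smul_right]
      have hself : ⟪x, x⟫_ℂ = ((‖x‖ ^ 2 : ℝ) : ℂ) := by
        exact_mod_cast inner_self_eq_norm_sq_to_K (𝕜 := ℂ) (x := x)
      rw [hself, Complex.conj_ofReal]
      push_cast
      ring
    simp only [hterm, ← Finset.mul_sum] at h1 h2
    have hx4 : (0:ℝ) < ‖x‖ ^ 4 := pow_pos (norm_pos_iff.mpr hx0) 4
    set z := ∑ s ∈ h.support, ∑ t ∈ h.support, ⟪(Γ s t) (h s), h t⟫_ℂ with hz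
    have hre : ((((‖x‖ ^ 4 : ℝ)) : ℂ) * z).re = ‖x‖ ^ 4 * z.re := by
      simp [Complex.mul_re, ← Complex.ofReal_pow]
    have him : ((((‖x‖ ^ 4 : ℝ)) : ℂ) * z).im = ‖x‖ ^ 4 * z.im := by
      simp [Complex.mul_im, ← Complex.ofReal_pow]
    rw [hre] at h1
    rw [him] at h2
    constructor
    · exact nonneg_of_mul_nonneg_right h1 hx4
    · exact (mul_eq_zero.mp h2).resolve_left (ne_of_gt hx4)
  · intro hyp T x
    set h : S →₀ H := Finsupp.onFinset T.support (fun s => T s x)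
      (fun s hs => Finsupp.mem_support_iff.mpr (fun h0 => hs (by simp [h0]))) with hh
    have hhs : ∀ s, h s = T s x := fun s => rfl
    have hsub : h.support ⊆ T.support := Finsupp.support_onFinset_subset
    have key : ∑ s ∈ h.support, ∑ t ∈ h.support, ⟪(Γ s t) (h s), h t⟫_ℂ
        = ∑ s ∈ T.support, ∑ t ∈ T.support, ⟪(Γ s t) (T s x), T t x⟫_ℂ := by
      rw [Finset.sum_subset hsub]
      · apply Finset.sum_congr rfl
        intro s _
        rw [Finset.sum_subset hsub]
        · exact Finset.sum_congr rfl fun t _ => by rw [hhs, hhs]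
        · intro t _ ht
          have : T t x = 0 := by
            have := Finsupp.notMem_support_iff.mp ht; rwa [hhs] at this
          rw [hhs t, this, inner_zero_right]
      · intro s _ hs
        have h0 : T s x = 0 := by
          have := Finsupp.notMem_support_iff.mp hs; rwa [hhs] at this
        apply Finset.sum_eq_zero
        intro t _
        rw [hhs s, h0, map_zero, inner_zero_left]
    obtain ⟨h1, h2⟩ := hyp h
    rw [key] at h1 h2
    rw [sum_inner_eq_aux]
    exact ⟨h1, h2⟩
end

section
/- Let H be a complex Hilbert space and S an arbitrary set. A kernel Γ : S → S → (H →L[ℂ] H) satisfies: for every finitely supported h : S → H the sum ∑_{s,t} ⟨(Γ s t) (h s), h t⟩ is a nonnegative real number, if and only if there exist a complex Hilbert space K and a family of bounded operators V : S → (H →L[ℂ] K) such that Γ s t = (V t)† ∘ (V s) for all s, t ∈ S and the closed linear span of the set { (V s) h : s ∈ S, h ∈ H } is all of K. -/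
open ContinuousLinearMap
open scoped InnerProductSpace

universe u v

/-!
Since the sesquilinear form `(f, g) ↦ ∑ s, ∑ t, ⟪Γ s t (f s), g t⟫` is real on the diagonal,
polarization makes it Hermitian, so the matrix
`t s ↦ Γ s t` is positive semidefinite, and Moore's construction `RKHS.OfKernel` realizes it as
the kernel of a reproducing kernel Hilbert space; its kernel functions are the `V s`, and they
span a dense subspace. The transpose is needed because Mathlib's `RKHS.kernel H x y` is
`(kerFun x)† ∘ kerFun y`. Conversely, a factorization turns the double sum into
`‖∑ s, V s (h s)‖ ^ 2`.
-/

open scoped Matrix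

theorem LinearMap.isSymm_of_forall_im_apply_self_eq_zero {E : Type*} [AddCommGroup E]
    [Module ℂ E] (B : E →ₗ⋆[ℂ] E →ₗ[ℂ] ℂ) (hB : ∀ x, (B x x).im = 0) : B.IsSymm := by
  refine ⟨fun x y => ?_⟩
  have h₁ := hB (x + y)
  have h₂ := hB (x + Complex.I • y)
  simp only [map_add, map_smulₛₗ, LinearMap.add_apply, LinearMap.smul_apply, smul_eq_mul,
    RingHom.id_apply, Complex.add_im, Complex.add_re, Complex.mul_im, Complex.mul_re,
    Complex.conj_re, Complex.conj_im, Complex.I_re, Complex.I_im, hB x, hB y] at h₁ h₂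
  apply Complex.ext <;> simp only [Complex.conj_re, Complex.conj_im] <;> linarith

theorem sum_sum_inner_adjoint_comp_apply {𝕜 E F ι : Type*} [RCLike 𝕜] [NormedAddCommGroup E]
    [InnerProductSpace 𝕜 E] [CompleteSpace E] [NormedAddCommGroup F] [InnerProductSpace 𝕜 F]
    [CompleteSpace F] (V : ι → E →L[𝕜] F) (A : Finset ι) (h : ι → E) :
    ∑ s ∈ A, ∑ t ∈ A, ⟪(adjoint (V t) ∘L V s) (h s), h t⟫_𝕜 =
      ⟪∑ s ∈ A, V s (h s), ∑ s ∈ A, V s (h s)⟫_𝕜 := by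
  simp only [comp_apply, adjoint_inner_left, sum_inner, inner_sum]
  exact Finset.sum_comm

namespace OperatorKernel

variable {H : Type*} [NormedAddCommGroup H] [InnerProductSpace ℂ H] {S : Type*}

noncomputable def form (Γ : S → S → (H →L[ℂ] H)) : (S →₀ H) →ₗ⋆[ℂ] (S →₀ H) →ₗ[ℂ] ℂ :=
  LinearMap.mk₂'ₛₗ _ _ (fun f g => f.sum fun s x => g.sum fun t y => ⟪Γ s t x, y⟫_ℂ)
    (fun f₁ f₂ g => by
      classical
      exact Finsupp.sum_add_index' (by simp) fun s x₁ x₂ => by simp [Finsupp.sum_add])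
    (fun c f g => by
      rw [Finsupp.sum_smul_index' (by simp)]
      simp only [map_smul, inner_smul_left, smul_eq_mul, Finsupp.sum, Finset.mul_sum])
    (fun f g₁ g₂ => by
      classical
      rw [← Finsupp.sum_add]
      exact Finsupp.sum_congr fun s _ =>
        Finsupp.sum_add_index' (by simp) fun t y₁ y₂ => inner_add_right _ _ _)
    (fun c f g => by
      simp only [Finsupp.sum_smul_index' (fun _ => inner_zero_right _), inner_smul_right,
        smul_eq_mul, RingHom.id_apply]
      simp only [Finsupp.sum, Finset.mul_sum])

variable (Γ : S → S → (H →L[ℂ] H))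

theorem form_single_single (s t : S) (x y : H) :
    form Γ (.single s x) (.single t y) = ⟪Γ s t x, y⟫_ℂ := by
  simp [form]

theorem isHermitian_of_isSymm_form [CompleteSpace H] (hΓ : (form Γ).IsSymm) :
    (Matrix.of Γ)ᵀ.IsHermitian := by
  refine Matrix.IsHermitian.ext fun s t => ext fun x => ext_inner_right ℂ fun y => ?_
  simpa [star_eq_adjoint, adjoint_inner_left, form_single_single] using
    hΓ.eq (.single s y) (.single t x)

theorem posSemidef_of_form_self [CompleteSpace H]
    (hΓ : ∀ f, 0 ≤ (form Γ f f).re ∧ (form Γ f f).im = 0) : (Matrix.of Γ)ᵀ.PosSemidef := by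
  have hsymm := LinearMap.isSymm_of_forall_im_apply_self_eq_zero _ fun f => (hΓ f).2
  have htfae := (RKHS.posSemidef_tfae (K := (Matrix.of Γ)ᵀ)).out 2 0
  exact htfae.mp ⟨isHermitian_of_isSymm_form Γ hsymm, fun f => (hΓ f).1⟩

end OperatorKernel

/-- **Theorem 4.5 (single Hilbert space): Kolmogorov factorization.**  A `B(H)`-valued
kernel `Γ` on a set `S` is positive definite in the vector sense iff there is a Hilbert
space `K` and a family of bounded operators `V s : H → K` with total range such that
`Γ s t = (V t)† ∘ (V s)` for all `s, t`. -/
theorem kernel_posDef_iff_factorization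
    {H : Type u} [NormedAddCommGroup H] [InnerProductSpace ℂ H] [CompleteSpace H]
    {S : Type v} (Γ : S → S → (H →L[ℂ] H)) :
    (∀ h : S →₀ H,
        0 ≤ (∑ s ∈ h.support, ∑ t ∈ h.support, ⟪(Γ s t) (h s), h t⟫_ℂ).re ∧
        (∑ s ∈ h.support, ∑ t ∈ h.support, ⟪(Γ s t) (h s), h t⟫_ℂ).im = 0) ↔
      ∃ (K : Type (max u v)) (_ : NormedAddCommGroup K) (_ : InnerProductSpace ℂ K)
        (_ : CompleteSpace K) (V : S → (H →L[ℂ] K)),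
        (∀ s t : S, Γ s t = adjoint (V t) ∘L (V s)) ∧
        (Submodule.span ℂ {x : K | ∃ (s : S) (h : H), (V s) h = x}).topologicalClosure =
          ⊤ := by
  constructor
  · intro hΓ
    have : Fact (Matrix.of Γ)ᵀ.PosSemidef := ⟨OperatorKernel.posSemidef_of_form_self Γ hΓ⟩
    refine ⟨RKHS.OfKernel (Matrix.of Γ)ᵀ, inferInstance, inferInstance, inferInstance,
      RKHS.kerFun _, fun s t => ?_, RKHS.kerFun_dense _⟩
    rw [← RKHS.kernel_apply, RKHS.OfKernel.kernel_ofKernel]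
    rfl
  · rintro ⟨K, _, _, _, V, hΓ, -⟩ h
    simp only [hΓ, sum_sum_inner_adjoint_comp_apply]
    exact ⟨inner_self_nonneg (𝕜 := ℂ), inner_self_im (𝕜 := ℂ) _⟩
end

section
/- Let H be a complex Hilbert space, S a commutative monoid with unit 1 equipped with a star operation (star (s*t) = star s * star t, star (star s) = s, star 1 = 1), and φ : S → (H →L[ℂ] H) with φ 1 = 1 (the identity operator). Assume: (LPD) for every finitely supported h : S → H the sum ∑_{s,t} ⟨φ(star t * s) (h s), h t⟩ is a nonnegative real number; and (BC) there is a function C : S → ℝ with C u > 0 for all u, such that for every u ∈ S and every finitely supported h : S → H, Re(∑_{s,t} ⟨φ(star t * star u * u * s) (h s), h t⟩) ≤ (C u)² · Re(∑_{s,t} ⟨φ(star t * s) (h s), h t⟩). Then there exist a complex Hilbert space K, a linear isometry J : H → K, and a map π : S → (K →L[ℂ] K) such that π 1 = 1, π (s*t) = (π s) ∘ (π t) for all s, t, π (star s) = (π s)† for all s, φ s = J† ∘ (π s) ∘ J for all s ∈ S, ‖π u‖ ≤ C u for all u ∈ S, and the closed linear span of { (π s) (J h) : s ∈ S, h ∈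 H } equals K. -/
open ContinuousLinearMap
open scoped InnerProductSpace

universe u v

/-!
Positivity says that `(t, s) ↦ φ (star t * s)` is a positive semidefinite operator-valued kernel
on `S` (it is hermitian by polarization, its quadratic form being real), so it is the kernel of a
reproducing kernel Hilbert space `K` of `H`-valued functions on `S`, in which the kernel functions
`kerFun s x` span a dense subspace. By the boundedness condition the translations
`kerFun s x ↦ kerFun (u * s) x` are bounded by `C u` on that subspace, so they extend to operators
`π u` on `K`. Computing on kernel functions, `π` is a unital `*`-representation, `J = kerFun 1` is
an isometry because `φ 1 = 1`, and `J† π s J = φ s`.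
-/

theorem LinearMap.isSymm_of_im_apply_self_eq_zero {M : Type*} [AddCommGroup M] [Module ℂ M]
    (B : M →ₗ⋆[ℂ] M →ₗ[ℂ] ℂ) (hB : ∀ x, (B x x).im = 0) : B.IsSymm := by
  refine ⟨fun x y => ?_⟩
  have h₁ := hB (x + y)
  have h₂ := hB (x + Complex.I • y)
  simp only [map_add, LinearMap.map_smulₛₗ, LinearMap.add_apply, LinearMap.smul_apply,
    smul_eq_mul, RingHom.id_apply, Complex.conj_I, Complex.add_re, Complex.add_im, Complex.mul_re,
    Complex.mul_im, Complex.neg_re, Complex.neg_im, Complex.I_re, Complex.I_im, hB x, hB y]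
    at h₁ h₂
  apply Complex.ext <;> simp only [Complex.conj_re, Complex.conj_im] <;> linarith

namespace RKHS

variable {𝕜 : Type*} [RCLike 𝕜] {X V 𝓚 : Type*} [NormedAddCommGroup V] [InnerProductSpace 𝕜 V]
  [CompleteSpace V] [NormedAddCommGroup 𝓚] [InnerProductSpace 𝕜 𝓚] [CompleteSpace 𝓚]
  [RKHS 𝕜 𝓚 X V]

theorem ext_inner_kerFun {f g : 𝓚} (h : ∀ x v, ⟪kerFun 𝓚 x v, f⟫_𝕜 = ⟪kerFun 𝓚 x v, g⟫_𝕜) :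
    f = g :=
  ext fun x => ext_inner_left 𝕜 fun v => by simpa using h x v

theorem continuousLinearMap_ext {F : Type*} [NormedAddCommGroup F] [NormedSpace 𝕜 F]
    {A B : 𝓚 →L[𝕜] F} (h : ∀ x v, A (kerFun 𝓚 x v) = B (kerFun 𝓚 x v)) : A = B :=
  ContinuousLinearMap.ext_on (Submodule.dense_iff_topologicalClosure_eq_top.2 (kerFun_dense 𝓚))
    (by rintro _ ⟨x, v, rfl⟩; exact h x v)

variable (𝓚) in
noncomputable def kerSum {Y : Type*} (g : Y → X) : (Y →₀ V) →ₗ[𝕜] 𝓚 :=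
  Finsupp.lsum 𝕜 fun y => (kerFun 𝓚 (g y)).toLinearMap

theorem kerSum_single {Y : Type*} (g : Y → X) (y : Y) (v : V) :
    kerSum 𝓚 g (Finsupp.single y v) = kerFun 𝓚 (g y) v := by
  simp [kerSum]

theorem norm_kerSum_sq {Y : Type*} (g : Y → X) (f : Y →₀ V) :
    ‖kerSum 𝓚 g f‖ ^ 2 =
      RCLike.re (∑ y ∈ f.support, ∑ y' ∈ f.support, ⟪kernel 𝓚 (g y') (g y) (f y), f y'⟫_𝕜) := by
  simp only [← inner_self_eq_norm_sq (𝕜 := 𝕜), kerSum, Finsupp.lsum_apply, Finsupp.sum,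
    coe_coe, sum_inner, inner_sum, kernel_inner]
  rw [Finset.sum_comm]

theorem denseRange_kerSum_id : DenseRange (kerSum 𝓚 (id : X → X) (V := V)) := by
  have hspan : Submodule.span 𝕜 {kerFun 𝓚 x v | (x) (v)} ≤ LinearMap.range (kerSum 𝓚 id) :=
    Submodule.span_le.2 fun _ ⟨x, v, hxv⟩ => ⟨Finsupp.single x v, hxv ▸ kerSum_single id x v⟩
  exact (Submodule.dense_iff_topologicalClosure_eq_top.2 (kerFun_dense 𝓚)).mono hspan

/-- Extends `kerFun s v ↦ kerFun (u * s) v`; this is the junk value `0` unless that map is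
bounded on the span of the kernel functions. -/
noncomputable def shift [Mul X] (u : X) : 𝓚 →L[𝕜] 𝓚 :=
  (kerSum 𝓚 (u * ·)).extendOfNorm (kerSum 𝓚 (id : X → X) (V := V))

section Monoid

variable [Monoid X] {T : X → 𝓚 →L[𝕜] 𝓚}

theorem map_one_of_kerFun (hT : ∀ u x v, T u (kerFun 𝓚 x v) = kerFun 𝓚 (u * x) v) : T 1 = 1 :=
  continuousLinearMap_ext fun x v => by simp [hT]

theorem map_mul_of_kerFun (hT : ∀ u x v, T u (kerFun 𝓚 x v) = kerFun 𝓚 (u * x) v) (s t : X) :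
    T (s * t) = T s ∘L T t :=
  continuousLinearMap_ext fun x v => by simp [hT, mul_assoc]

theorem topologicalClosure_span_of_kerFun
    (hT : ∀ u x v, T u (kerFun 𝓚 x v) = kerFun 𝓚 (u * x) v) :
    (Submodule.span 𝕜 {f : 𝓚 | ∃ (s : X) (v : V), T s (kerFun 𝓚 1 v) = f}).topologicalClosure =
      ⊤ := by
  simpa [hT] using kerFun_dense 𝓚

end Monoid

end RKHS

namespace SzNagy

open RKHS

variable {H : Type*} [NormedAddCommGroup H] [InnerProductSpace ℂ H]
  {S : Type*} [CommMonoid S] [StarMul S]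

noncomputable def kernelForm (φ : S → H →L[ℂ] H) : (S →₀ H) →ₗ⋆[ℂ] (S →₀ H) →ₗ[ℂ] ℂ :=
  LinearMap.mk₂'ₛₗ (starRingEnd ℂ) (RingHom.id ℂ)
    (fun h k => h.sum fun s x => k.sum fun t y => ⟪φ (star t * s) x, y⟫_ℂ)
    (fun _ _ _ => Finsupp.sum_add_index' (by simp) (by simp [Finsupp.sum_add]))
    (fun _ _ _ => by
      rw [Finsupp.sum_smul_index' (by simp)]
      simp only [map_smul, inner_smul_left, Finsupp.sum, Finset.mul_sum, smul_eq_mul])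
    (fun _ _ _ => by
      simp only [← Finsupp.sum_add]
      exact Finsupp.sum_congr fun _ _ => Finsupp.sum_add_index' (by simp) (by simp))
    (fun _ _ _ => by
      simp only [RingHom.id_apply, smul_eq_mul, Finsupp.sum, Finset.mul_sum]
      refine Finset.sum_congr rfl fun _ _ => ?_
      rw [← Finsupp.sum, Finsupp.sum_smul_index' (by simp)]
      simp [Finsupp.sum])

theorem kernelForm_apply (φ : S → H →L[ℂ] H) (h k : S →₀ H) :
    kernelForm φ h k = ∑ s ∈ h.support, ∑ t ∈ k.support, ⟪φ (star t * s) (h s), k t⟫_ℂ := rfl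

theorem kernelForm_single (φ : S → H →L[ℂ] H) (s t : S) (x y : H) :
    kernelForm φ (Finsupp.single s x) (Finsupp.single t y) = ⟪φ (star t * s) x, y⟫_ℂ := by
  simp [kernelForm]

def BoundednessCondition (φ : S → H →L[ℂ] H) (u : S) (c : ℝ) : Prop :=
  ∀ h : S →₀ H, (∑ s ∈ h.support, ∑ t ∈ h.support,
    ⟪φ (star t * star u * u * s) (h s), h t⟫_ℂ).re ≤ c ^ 2 * (kernelForm φ h h).re

variable [CompleteSpace H]

def starKernel (φ : S → H →L[ℂ] H) : Matrix S S (H →L[ℂ] H) :=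
  Matrix.of fun t s => φ (star t * s)

theorem isHermitian_starKernel {φ : S → H →L[ℂ] H} (hφ : ∀ h, (kernelForm φ h h).im = 0) :
    (starKernel φ).IsHermitian := by
  refine Matrix.IsHermitian.ext fun t s => Eq.symm ?_
  rw [starKernel, Matrix.of_apply, Matrix.of_apply, star_eq_adjoint, eq_adjoint_iff]
  intro x y
  have := ((kernelForm φ).isSymm_of_im_apply_self_eq_zero hφ).eq
    (Finsupp.single t y) (Finsupp.single s x)
  rw [kernelForm_single, kernelForm_single, inner_conj_symm] at this
  exact this.symm

theorem posSemidef_starKernel {φ : S → H →L[ℂ] H}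
    (hφ : ∀ h, 0 ≤ (kernelForm φ h h).re ∧ (kernelForm φ h h).im = 0) :
    (starKernel φ).PosSemidef :=
  (posSemidef_tfae (K := starKernel φ)).out 2 0 |>.1 <|
    And.intro (isHermitian_starKernel fun h => (hφ h).2) fun h => (hφ h).1

variable {𝓚 : Type*} [NormedAddCommGroup 𝓚] [InnerProductSpace ℂ 𝓚] [CompleteSpace 𝓚]
  [RKHS ℂ 𝓚 S H] {φ : S → H →L[ℂ] H}

theorem norm_kerSum_mul_le (hk : kernel 𝓚 = starKernel φ) {u : S} {c : ℝ} (hc : 0 ≤ c)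
    (hu : BoundednessCondition φ u c) (h : S →₀ H) :
    ‖kerSum 𝓚 (u * ·) h‖ ≤ c * ‖kerSum 𝓚 id h‖ := by
  rw [← sq_le_sq₀ (norm_nonneg _) (by positivity), mul_pow, norm_kerSum_sq, norm_kerSum_sq, hk]
  simpa [starKernel, star_mul, mul_assoc, kernelForm_apply] using hu h

theorem shift_kerFun (hk : kernel 𝓚 = starKernel φ) {u : S} {c : ℝ} (hc : 0 ≤ c)
    (hu : BoundednessCondition φ u c) (s : S) (x : H) :
    shift u (kerFun 𝓚 s x) = kerFun 𝓚 (u * s) x := by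
  have := LinearMap.extendOfNorm_eq (f := kerSum 𝓚 (u * ·)) (e := kerSum 𝓚 (id : S → S))
    denseRange_kerSum_id ⟨c, norm_kerSum_mul_le hk hc hu⟩ (Finsupp.single s x)
  rwa [kerSum_single, kerSum_single] at this

theorem norm_shift_le (hk : kernel 𝓚 = starKernel φ) {u : S} {c : ℝ} (hc : 0 ≤ c)
    (hu : BoundednessCondition φ u c) : ‖(shift u : 𝓚 →L[ℂ] 𝓚)‖ ≤ c :=
  LinearMap.opNorm_extendOfNorm_le (f := kerSum 𝓚 (u * ·)) denseRange_kerSum_id hc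
    (norm_kerSum_mul_le hk hc hu)

theorem adjoint_kerFun_one_comp (hk : kernel 𝓚 = starKernel φ) (hφ1 : φ 1 = 1) :
    adjoint (kerFun 𝓚 1) ∘L kerFun 𝓚 1 = 1 := by
  rw [← kernel_apply, hk]
  simp [starKernel, hφ1]

variable {T : S → 𝓚 →L[ℂ] 𝓚}

theorem map_star_of_kerFun (hk : kernel 𝓚 = starKernel φ)
    (hT : ∀ u s x, T u (kerFun 𝓚 s x) = kerFun 𝓚 (u * s) x) (u : S) :
    T (star u) = adjoint (T u) := by
  refine continuousLinearMap_ext fun s x => ext_inner_kerFun fun t y => ?_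
  rw [adjoint_inner_right, hT, hT, ← kernel_inner, ← kernel_inner, hk]
  simp [starKernel, star_mul, mul_assoc, mul_left_comm]

theorem eq_adjoint_kerFun_one_comp (hk : kernel 𝓚 = starKernel φ)
    (hT : ∀ u s x, T u (kerFun 𝓚 s x) = kerFun 𝓚 (u * s) x) (s : S) :
    φ s = adjoint (kerFun 𝓚 1) ∘L T s ∘L kerFun 𝓚 1 := by
  have hTs : T s ∘L kerFun 𝓚 1 = kerFun 𝓚 s := ext fun x => by simp [hT]
  rw [hTs, ← kernel_apply, hk]
  simp [starKernel]

end SzNagy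

open RKHS SzNagy in
/-- **Theorem 5.1 (single Hilbert space): Sz.-Nagy type dilation theorem.**  A positive
definite `B(H)`-valued function `φ` on a commutative `*`-monoid `S`, with `φ 1 = 1` and
satisfying the boundedness condition, dilates to a `*`-representation `π` of `S` on a
larger Hilbert space `K`: `φ s = J† ∘ π s ∘ J` with `J : H → K` a linear isometry,
`‖π u‖ ≤ C u`, and `K` minimal. -/
theorem szNagy_dilation
    {H : Type u} [NormedAddCommGroup H] [InnerProductSpace ℂ H] [CompleteSpace H]
    {S : Type v} [CommMonoid S] [StarMul S]
    (φ : S → (H →L[ℂ] H)) (hφ1 : φ 1 = 1)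
    (hLPD : ∀ h : S →₀ H,
      0 ≤ (∑ s ∈ h.support, ∑ t ∈ h.support, ⟪φ (star t * s) (h s), h t⟫_ℂ).re ∧
      (∑ s ∈ h.support, ∑ t ∈ h.support, ⟪φ (star t * s) (h s), h t⟫_ℂ).im = 0)
    (C : S → ℝ) (hC : ∀ u : S, 0 < C u)
    (hBC : ∀ (u : S) (h : S →₀ H),
      (∑ s ∈ h.support, ∑ t ∈ h.support,
          ⟪φ (star t * star u * u * s) (h s), h t⟫_ℂ).re ≤
        (C u) ^ 2 *
          (∑ s ∈ h.support, ∑ t ∈ h.support, ⟪φ (star t * s) (h s), h t⟫_ℂ).re) :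
    ∃ (K : Type (max u v)) (_ : NormedAddCommGroup K) (_ : InnerProductSpace ℂ K)
      (_ : CompleteSpace K) (J : H →ₗᵢ[ℂ] K) (π : S → (K →L[ℂ] K)),
      π 1 = 1 ∧
      (∀ s t : S, π (s * t) = π s ∘L π t) ∧
      (∀ s : S, π (star s) = adjoint (π s)) ∧
      (∀ s : S, φ s =
        adjoint J.toContinuousLinearMap ∘L π s ∘L J.toContinuousLinearMap) ∧
      (∀ u : S, ‖π u‖ ≤ C u) ∧
      (Submodule.span ℂ
          {x : K | ∃ (s : S) (h : H), π s (J h) = x}).topologicalClosure = ⊤ := by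
  have : Fact (starKernel φ).PosSemidef := ⟨posSemidef_starKernel hLPD⟩
  have hk : kernel (OfKernel (starKernel φ)) = starKernel φ := OfKernel.kernel_ofKernel
  have hT u s x := shift_kerFun hk (hC u).le (hBC u) s x
  let J : H →ₗᵢ[ℂ] OfKernel (starKernel φ) :=
    ⟨(kerFun _ 1).toLinearMap,
      (norm_map_iff_adjoint_comp_self _).2 (adjoint_kerFun_one_comp hk hφ1)⟩
  exact ⟨_, inferInstance, inferInstance, inferInstance, J, shift, map_one_of_kerFun hT,
    map_mul_of_kerFun hT, map_star_of_kerFun hk hT, eq_adjoint_kerFun_one_comp hk hT,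
    fun u => norm_shift_le hk (hC u).le (hBC u), topologicalClosure_span_of_kerFun hT⟩
end

section
/- Let H, K be complex Hilbert spaces, S a commutative monoid with unit 1 equipped with a star operation (star (s*t) = star s * star t, star (star s) = s, star 1 = 1), J : H → K a linear isometry, and π : S → (K →L[ℂ] K) a representation: π 1 = 1, π (s*t) = (π s) ∘ (π t), π (star s) = (π s)†. Assume the minimality condition: the closed linear span of { (π s) (J h) : s ∈ S, h ∈ H } equals K. Define φ s := J† ∘ (π s) ∘ J. If u, v, w ∈ S are such that φ (s*u*t) + φ (s*v*t) = φ (s*w*t) for all s, t ∈ S, then π w = π u + π v. -/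
open ContinuousLinearMap
open scoped InnerProductSpace

/-!
Since `π` is multiplicative and `*`-preserving,
`⟪π(r) π(s) J h, π(t) J g⟫ = ⟪φ(t* r s) h, g⟫`, so the hypothesis says that `π w` and
`π u + π v` have the same matrix coefficients on the vectors `π(s) J h`. By minimality
these vectors span a dense subspace of `K`, hence the two bounded operators coincide.
-/

theorem ContinuousLinearMap.eq_of_inner_eq_of_dense_span
    {𝕜 E : Type*} [RCLike 𝕜] [NormedAddCommGroup E] [InnerProductSpace 𝕜 E]
    {s : Set E} (hs : Dense (Submodule.span 𝕜 s : Set E)) {A B : E →L[𝕜] E}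
    (h : ∀ x ∈ s, ∀ y ∈ s, ⟪A x, y⟫_𝕜 = ⟪B x, y⟫_𝕜) : A = B := by
  refine ext_on hs fun x hx => ?_
  have : innerSL 𝕜 (A x - B x) = 0 :=
    ext_on hs fun y hy => by simp [h x hx y hy]
  rw [← sub_eq_zero, ← inner_self_eq_zero (𝕜 := 𝕜)]
  exact congr($this (A x - B x))

theorem inner_apply_apply_eq_inner_star_mul_apply
    {S K : Type*} [Monoid S] [StarMul S]
    [NormedAddCommGroup K] [InnerProductSpace ℂ K] [CompleteSpace K]
    {π : S → (K →L[ℂ] K)} (hπmul : ∀ s t : S, π (s * t) = π s ∘L π t)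
    (hπstar : ∀ s : S, π (star s) = adjoint (π s)) (r s t : S) (x y : K) :
    ⟪π r (π s x), π t y⟫_ℂ = ⟪π (star t * r * s) x, y⟫_ℂ := by
  rw [← adjoint_inner_left, ← hπstar, hπmul, hπmul]
  rfl

theorem minimal_dilation_additive_relation_general
    {H K : Type*} [NormedAddCommGroup H] [InnerProductSpace ℂ H] [CompleteSpace H]
    [NormedAddCommGroup K] [InnerProductSpace ℂ K] [CompleteSpace K]
    {S : Type*} [CommMonoid S] [StarMul S]
    (J : H →ₗᵢ[ℂ] K) (π : S → (K →L[ℂ] K))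
    (hπmul : ∀ s t : S, π (s * t) = π s ∘L π t)
    (hπstar : ∀ s : S, π (star s) = adjoint (π s))
    (hmin : (Submodule.span ℂ
        {x : K | ∃ (s : S) (h : H), π s (J h) = x}).topologicalClosure = ⊤)
    (φ : S → (H →L[ℂ] H))
    (hφ : ∀ s : S, φ s =
      adjoint J.toContinuousLinearMap ∘L π s ∘L J.toContinuousLinearMap)
    (u v w : S)
    (huvw : ∀ s t : S, φ (s * u * t) + φ (s * v * t) = φ (s * w * t)) :
    π w = π u + π v := by
  have inner_φ (s : S) (h g : H) : ⟪φ s h, g⟫_ℂ = ⟪π s (J h), J g⟫_ℂ := by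
    simp [hφ, adjoint_inner_left]
  refine eq_of_inner_eq_of_dense_span
    (Submodule.dense_iff_topologicalClosure_eq_top.mpr hmin) ?_
  rintro _ ⟨s, h, rfl⟩ _ ⟨t, g, rfl⟩
  simp only [add_apply, inner_add_left,
    inner_apply_apply_eq_inner_star_mul_apply hπmul hπstar, ← inner_φ, ← huvw]

/-- **Theorem 5.1 (ii) (single Hilbert space).**  Let `π` be a minimal `*`-representation
of a commutative `*`-monoid `S` dilating `φ s = J† ∘ π s ∘ J`.  If
`φ (s*u*t) + φ (s*v*t) = φ (s*w*t)` for all `s, t ∈ S`, then `π w = π u + π v`. -/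
theorem minimal_dilation_additive_relation
    {H K : Type*} [NormedAddCommGroup H] [InnerProductSpace ℂ H] [CompleteSpace H]
    [NormedAddCommGroup K] [InnerProductSpace ℂ K] [CompleteSpace K]
    {S : Type*} [CommMonoid S] [StarMul S]
    (J : H →ₗᵢ[ℂ] K) (π : S → (K →L[ℂ] K))
    (hπ1 : π 1 = 1)
    (hπmul : ∀ s t : S, π (s * t) = π s ∘L π t)
    (hπstar : ∀ s : S, π (star s) = adjoint (π s))
    (hmin : (Submodule.span ℂ
        {x : K | ∃ (s : S) (h : H), π s (J h) = x}).topologicalClosure = ⊤)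
    (φ : S → (H →L[ℂ] H))
    (hφ : ∀ s : S, φ s =
      adjoint J.toContinuousLinearMap ∘L π s ∘L J.toContinuousLinearMap)
    (u v w : S)
    (huvw : ∀ s t : S, φ (s * u * t) + φ (s * v * t) = φ (s * w * t)) :
    π w = π u + π v :=
  minimal_dilation_additive_relation_general J π hπmul hπstar hmin φ hφ u v w huvw
end

section
/- Let H be a complex Hilbert space and T : H →L[ℂ] H with ‖T‖ ≤ 1. Then there exist a complex Hilbert space K, a linear isometry J : H → K, and a unitary operator U : K →L[ℂ] K (i.e. U† ∘ U = 1 and U ∘ U† = 1) such that Tⁿ = J† ∘ Uⁿ ∘ J for every natural number n, and the closed linear span of { Uᵐ ((U†)ᵏ (J h)) : m, k ∈ ℕ, h ∈ H } equals K. -/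
/-!
Schäffer's construction. For a contraction `T` put `D = √(1 - T†T)` and `D⁎ = √(1 - TT†)`. The
Halmos matrix `[[D⁎, T], [-T†, D]]` is unitary because `T D = D⁎ T`, an identity obtained from
`T (1 - T†T) = (1 - TT†) T` by approximating the square root with polynomials. Letting this matrix
act on the coordinates `-1, 0` of `ℓ²(ℤ, H)` and following it by the bilateral shift gives a unitary
`U` which maps sequences vanishing on the negative integers to such sequences, acting as `T` on the
`0`-th coordinate there; hence `Tⁿ = J† Uⁿ J` for the inclusion `J` of `H` at coordinate `0`.
Finally `U` is restricted to the closed span of the vectors `Uᵐ U†ᵏ J h`, which reduces `U`.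
-/

open ContinuousLinearMap

universe u

section Intertwining

open Polynomial Filter Topology

theorem SemiconjBy.aeval {R A : Type*} [CommSemiring R] [Semiring A] [Algebra R A]
    {x a b : A} (h : SemiconjBy x a b) (p : R[X]) :
    SemiconjBy x (aeval a p) (aeval b p) := by
  induction p using Polynomial.induction_on' with
  | add p q hp hq => simpa only [map_add] using hp.add_right hq
  | monomial n r =>
    simpa only [aeval_monomial] using
      SemiconjBy.mul_right (Algebra.commute_algebraMap_right r x) (h.pow_right n)

theorem SemiconjBy.cfc_real {A : Type*} [CStarAlgebra A] {x a b : A} (h : SemiconjBy x a b)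
    (ha : IsSelfAdjoint a) (hb : IsSelfAdjoint b) {f : ℝ → ℝ} (hf : Continuous f) :
    SemiconjBy x (cfc f a) (cfc f b) := by
  have hcompact := (ContinuousFunctionalCalculus.isCompact_spectrum (R := ℝ) a).union
    (ContinuousFunctionalCalculus.isCompact_spectrum (R := ℝ) b)
  obtain ⟨L, hL⟩ := hcompact.bddBelow
  obtain ⟨R, hR⟩ := hcompact.bddAbove
  choose p hp using fun n : ℕ ↦
    exists_polynomial_near_of_continuousOn L R f hf.continuousOn (1 / (n + 1)) (by positivity)
  have hlim (c : A) (hc : spectrum ℝ c ⊆ spectrum ℝ a ∪ spectrum ℝ b) :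
      Tendsto (fun n ↦ cfc (p n).eval c) atTop (𝓝 (cfc f c)) := by
    refine tendsto_cfc_fun (Metric.tendstoUniformlyOn_iff.mpr fun ε hε ↦ ?_)
      (.of_forall fun n ↦ (p n).continuous.continuousOn)
    obtain ⟨N, hN⟩ := exists_nat_one_div_lt hε
    filter_upwards [eventually_ge_atTop N] with n hn t ht
    rw [dist_comm, Real.dist_eq]
    refine (hp n t ⟨hL (hc ht), hR (hc ht)⟩).trans_le (hN.le.trans' ?_)
    gcongr
  have hpoly (n : ℕ) : x * cfc (p n).eval a = cfc (p n).eval b * x := by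
    rw [cfc_polynomial (p n) a ha, cfc_polynomial (p n) b hb]
    exact h.aeval (p n)
  refine tendsto_nhds_unique ((hlim a Set.subset_union_left).const_mul x) ?_
  simp_rw [hpoly]
  exact (hlim b Set.subset_union_right).mul_const x

end Intertwining

section Defect

variable {A : Type*} [CStarAlgebra A]

noncomputable def defect (a : A) : A := cfc Real.sqrt (1 - star a * a)

theorem isSelfAdjoint_defect (a : A) : IsSelfAdjoint (defect a) := cfc_predicate _ _

theorem defect_mul_self [PartialOrder A] [StarOrderedRing A] {a : A} (ha : ‖a‖ ≤ 1) :
    defect a * defect a = 1 - star a * a := by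
  have hnonneg : 0 ≤ 1 - star a * a := by
    refine sub_nonneg.mpr ((CStarAlgebra.norm_le_one_iff_of_nonneg _).mp ?_)
    rw [CStarRing.norm_star_mul_self]
    nlinarith [norm_nonneg a]
  rw [defect, ← cfc_mul .., cfc_congr (f := fun t ↦ √t * √t) (g := id) fun t ht ↦
    Real.mul_self_sqrt (spectrum_nonneg_of_nonneg hnonneg ht), cfc_id ℝ (1 - star a * a)]

theorem mul_defect (a : A) : a * defect a = defect (star a) * a := by
  have h : SemiconjBy a (1 - star a * a) (1 - star (star a) * star a) := by
    rw [SemiconjBy, star_star]; noncomm_ring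
  exact h.cfc_real ((IsSelfAdjoint.one _).sub (.star_mul_self a))
    ((IsSelfAdjoint.one _).sub (.star_mul_self _)) Real.continuous_sqrt

noncomputable def halmosMatrix (a : A) : Matrix (Fin 2) (Fin 2) A :=
  !![defect (star a), a; -star a, defect a]

theorem halmosMatrix_mem_unitary [PartialOrder A] [StarOrderedRing A] {a : A} (ha : ‖a‖ ≤ 1) :
    halmosMatrix a ∈ unitary (Matrix (Fin 2) (Fin 2) A) := by
  have hD := defect_mul_self ha
  have hD' : defect (star a) * defect (star a) = 1 - a * star a := by
    simpa using defect_mul_self (a := star a) (by rwa [norm_star])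
  have hDD' := mul_defect a
  have hD'D : star a * defect (star a) = defect a * star a := by
    simpa using mul_defect (star a)
  have hstar : star (halmosMatrix a) = !![defect (star a), -a; star a, defect a] := by
    ext i j
    fin_cases i <;> fin_cases j <;>
      simp [halmosMatrix, Matrix.star_apply, (isSelfAdjoint_defect _).star_eq]
  rw [Unitary.mem_iff, hstar, halmosMatrix]
  simp [Matrix.one_fin_two, hD, hD', hDD', hD'D]

end Defect

namespace lp

open scoped lp

section Reindex

variable {𝕜 ι ι' E : Type*} [NormedField 𝕜] [NormedAddCommGroup E] [NormedSpace 𝕜 E]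

noncomputable def reindex (e : ι ≃ ι') : ℓ²(ι', E) ≃ₗᵢ[𝕜] ℓ²(ι, E) where
  toFun f := ⟨f ∘ e, memℓp_gen <| e.summable_iff.mpr <| (lp.memℓp f).summable (by norm_num)⟩
  invFun f := ⟨f ∘ e.symm,
    memℓp_gen <| e.symm.summable_iff.mpr <| (lp.memℓp f).summable (by norm_num)⟩
  map_add' _ _ := rfl
  map_smul' _ _ := rfl
  left_inv f := lp.ext <| funext fun i ↦ congrArg f (e.apply_symm_apply i)
  right_inv f := lp.ext <| funext fun i ↦ congrArg f (e.symm_apply_apply i)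
  norm_map' f := by
    rw [lp.norm_eq_tsum_rpow (by norm_num), lp.norm_eq_tsum_rpow (by norm_num)]
    exact congrArg (· ^ _) (e.tsum_eq fun i ↦ ‖f i‖ ^ (2 : ENNReal).toReal)

end Reindex

section Matrix

variable {𝕜 ι E m : Type*} [RCLike 𝕜] [DecidableEq ι]
  [NormedAddCommGroup E] [InnerProductSpace 𝕜 E] [Fintype m] [DecidableEq m]

noncomputable def singleLinearIsometry (i : ι) : E →ₗᵢ[𝕜] ℓ²(ι, E) :=
  ⟨(singleContinuousLinearMap 𝕜 (fun _ : ι ↦ E) 2 i).toLinearMap, fun x ↦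
    lp.norm_single (E := fun _ : ι ↦ E) (p := 2) (by norm_num) i x⟩

/-- The operator acting as the matrix `M` on the coordinates `v k` and as the identity on the
others, when `v` is injective. -/
noncomputable def extendMatrix (v : m → ι) (M : Matrix m m (E →L[𝕜] E)) :
    ℓ²(ι, E) →L[𝕜] ℓ²(ι, E) :=
  1 + ∑ k, ∑ l, singleContinuousLinearMap 𝕜 _ 2 (v k) ∘L (M - 1) k l ∘L evalCLM 𝕜 _ 2 (v l)

variable {v : m → ι}

theorem extendMatrix_apply_of_notMem (M : Matrix m m (E →L[𝕜] E)) (x : ℓ²(ι, E)) {n : ι}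
    (hn : n ∉ Set.range v) : extendMatrix v M x n = x n := by
  have hcoord (y : ℓ²(ι, E)) : y n = evalCLM 𝕜 (fun _ ↦ E) 2 n y := rfl
  have hn' (k : m) : n ≠ v k := fun h ↦ hn ⟨k, h.symm⟩
  simp only [hcoord, extendMatrix, add_apply, sum_apply, map_add, map_sum, comp_apply]
  simp [evalCLM, singleContinuousLinearMap_apply, lp.single_apply, hn']

theorem extendMatrix_apply_self (hv : v.Injective) (M : Matrix m m (E →L[𝕜] E))
    (x : ℓ²(ι, E)) (k : m) : extendMatrix v M x (v k) = ∑ l, M k l (x (v l)) := by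
  have hcoord (y : ℓ²(ι, E)) : y (v k) = evalCLM 𝕜 (fun _ ↦ E) 2 (v k) y := rfl
  simp only [hcoord, extendMatrix, add_apply, sum_apply, map_add, map_sum, comp_apply]
  simp [evalCLM, singleContinuousLinearMap_apply, lp.single_apply, Pi.single_apply,
    hv.eq_iff, Matrix.one_apply, apply_ite DFunLike.coe, ite_apply]

theorem extendMatrix_one : extendMatrix v (1 : Matrix m m (E →L[𝕜] E)) = 1 := by
  simp [extendMatrix]

theorem extendMatrix_mul (hv : v.Injective) (M N : Matrix m m (E →L[𝕜] E)) :
    extendMatrix v (M * N) = extendMatrix v M * extendMatrix v N := by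
  ext x : 1
  refine lp.ext (funext fun n ↦ ?_)
  by_cases hn : n ∈ Set.range v
  · obtain ⟨k, rfl⟩ := hn
    simp only [mul_apply_eq_comp, extendMatrix_apply_self hv, map_sum, Matrix.mul_apply,
      sum_apply]
    exact Finset.sum_comm
  · simp only [mul_apply_eq_comp, extendMatrix_apply_of_notMem _ _ hn]

variable [CompleteSpace E]

theorem adjoint_singleContinuousLinearMap (i : ι) :
    adjoint (singleContinuousLinearMap 𝕜 (fun _ : ι ↦ E) 2 i) = evalCLM 𝕜 _ 2 i :=
  ((eq_adjoint_iff _ _).mpr fun f a ↦ (lp.inner_single_right i a f).symm).symm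

theorem adjoint_evalCLM (i : ι) :
    adjoint (evalCLM 𝕜 (fun _ : ι ↦ E) 2 i) = singleContinuousLinearMap 𝕜 (fun _ : ι ↦ E) 2 i := by
  rw [← adjoint_singleContinuousLinearMap, adjoint_adjoint]

theorem adjoint_extendMatrix (M : Matrix m m (E →L[𝕜] E)) :
    adjoint (extendMatrix v M) = extendMatrix v (star M) := by
  have hstar : star M - 1 = star (M - 1) := by rw [star_sub, star_one]
  simp only [extendMatrix, hstar, map_add, map_sum, adjoint_comp, adjoint_one,
    adjoint_evalCLM, adjoint_singleContinuousLinearMap, comp_assoc, Matrix.star_apply,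
    star_eq_adjoint]
  rw [Finset.sum_comm]

theorem extendMatrix_mem_unitary (hv : v.Injective) {M : Matrix m m (E →L[𝕜] E)}
    (hM : M ∈ unitary (Matrix m m (E →L[𝕜] E))) :
    extendMatrix v M ∈ unitary (ℓ²(ι, E) →L[𝕜] ℓ²(ι, E)) := by
  rw [Unitary.mem_iff, star_eq_adjoint, adjoint_extendMatrix, ← extendMatrix_mul hv,
    ← extendMatrix_mul hv, Unitary.star_mul_self_of_mem hM, Unitary.mul_star_self_of_mem hM,
    extendMatrix_one]
  exact ⟨rfl, rfl⟩

end Matrix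

end lp

section Subspace

variable {𝕜 E F : Type*} [NontriviallyNormedField 𝕜] [NormedAddCommGroup E] [NormedSpace 𝕜 E]
  [NormedAddCommGroup F] [NormedSpace 𝕜 F]

def LinearIsometry.codRestrict (f : E →ₗᵢ[𝕜] F) (p : Submodule 𝕜 F) (h : ∀ x, f x ∈ p) :
    E →ₗᵢ[𝕜] p :=
  ⟨f.toLinearMap.codRestrict p h, f.norm_map⟩

theorem ContinuousLinearMap.coe_restrict_pow_apply {A : F →L[𝕜] F} {p : Submodule 𝕜 F}
    (hA : ∀ x ∈ p, A x ∈ p) (n : ℕ) (x : p) : ((A.restrict hA ^ n) x : F) = (A ^ n) x := by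
  induction n with
  | zero => rfl
  | succ n ih => simp only [pow_succ', mul_apply_eq_comp, coe_restrict_apply, ih]

theorem Submodule.mapsTo_topologicalClosure_span {f : E →L[𝕜] F} {s : Set E} {t : Set F}
    (h : Set.MapsTo f s t) :
    Set.MapsTo f (span 𝕜 s).topologicalClosure (span 𝕜 t).topologicalClosure := by
  have hspan : span 𝕜 s ≤ (span 𝕜 t).comap (f : E →ₗ[𝕜] F) :=
    Submodule.span_le.mpr fun y hy ↦ Submodule.subset_span (h hy)
  simpa only [Submodule.topologicalClosure_coe] using
    Set.MapsTo.closure (f := f) (fun x hx ↦ hspan hx) f.continuous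

theorem Submodule.topologicalClosure_span_eq_top_of_le {p : Submodule 𝕜 F} (t : Set p)
    (hp : p ≤ (span 𝕜 (((↑) : p → F) '' t)).topologicalClosure) :
    (span 𝕜 t).topologicalClosure = ⊤ := by
  refine eq_top_iff.mpr fun x _ ↦ ?_
  have hx := hp x.2
  rw [← SetLike.mem_coe, Submodule.topologicalClosure_coe, ← p.coe_subtype,
    Submodule.span_image p.subtype, Submodule.map_coe] at hx
  rwa [← SetLike.mem_coe, Submodule.topologicalClosure_coe,
    Topology.IsInducing.subtypeVal.closure_eq_preimage_closure_image]

end Subspace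

section Dilation

variable {𝕜 H K ι : Type*} [RCLike 𝕜] [NormedAddCommGroup H] [InnerProductSpace 𝕜 H]
  [CompleteSpace H] [NormedAddCommGroup K] [InnerProductSpace 𝕜 K] [CompleteSpace K]

theorem LinearIsometryEquiv.coe_mem_unitary (e : K ≃ₗᵢ[𝕜] K) :
    (e : K →L[𝕜] K) ∈ unitary (K →L[𝕜] K) := by
  rw [Unitary.mem_iff, star_eq_adjoint, e.adjoint_eq_symm]
  constructor <;> ext x <;> simp

theorem ContinuousLinearMap.adjoint_restrict {A : K →L[𝕜] K} {p : Submodule 𝕜 K} [CompleteSpace p]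
    (hA : ∀ x ∈ p, A x ∈ p) (hA' : ∀ x ∈ p, adjoint A x ∈ p) :
    adjoint (A.restrict hA) = (adjoint A).restrict hA' :=
  ((eq_adjoint_iff _ _).mpr fun x y ↦ by
    simp only [Submodule.coe_inner, coe_restrict_apply, adjoint_inner_left]).symm

theorem ContinuousLinearMap.restrict_mem_unitary {U : K →L[𝕜] K} (hU : U ∈ unitary (K →L[𝕜] K))
    {p : Submodule 𝕜 K} [CompleteSpace p] (hp : ∀ x ∈ p, U x ∈ p)
    (hp' : ∀ x ∈ p, adjoint U x ∈ p) : U.restrict hp ∈ unitary (p →L[𝕜] p) := by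
  rw [Unitary.mem_iff, star_eq_adjoint, adjoint_restrict hp hp']
  have h₁ := Unitary.star_mul_self_of_mem hU
  have h₂ := Unitary.mul_star_self_of_mem hU
  exact ⟨ext fun x ↦ Subtype.ext congr($h₁ (x : K)), ext fun x ↦ Subtype.ext congr($h₂ (x : K))⟩

def unitaryOrbit (U : K →L[𝕜] K) (j : ι → K) : Set K :=
  {x | ∃ (m k : ℕ) (i : ι), (U ^ m) ((adjoint U ^ k) (j i)) = x}

def reducingHull (U : K →L[𝕜] K) (j : ι → K) : Submodule 𝕜 K :=
  (Submodule.span 𝕜 (unitaryOrbit U j)).topologicalClosure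

instance (U : K →L[𝕜] K) (j : ι → K) : CompleteSpace (reducingHull U j) :=
  (Submodule.isClosed_topologicalClosure _).completeSpace_coe

theorem mem_reducingHull (U : K →L[𝕜] K) (j : ι → K) (i : ι) : j i ∈ reducingHull U j :=
  Submodule.le_topologicalClosure _ (Submodule.subset_span ⟨0, 0, i, rfl⟩)

theorem apply_mem_reducingHull (U : K →L[𝕜] K) (j : ι → K) :
    ∀ x ∈ reducingHull U j, U x ∈ reducingHull U j := by
  refine fun x hx ↦ Submodule.mapsTo_topologicalClosure_span ?_ hx
  rintro _ ⟨m, k, i, rfl⟩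
  exact ⟨m + 1, k, i, by rw [pow_succ', mul_apply_eq_comp]⟩

theorem adjoint_apply_mem_reducingHull {U : K →L[𝕜] K} (hU : adjoint U ∘L U = 1) (j : ι → K) :
    ∀ x ∈ reducingHull U j, adjoint U x ∈ reducingHull U j := by
  refine fun x hx ↦ Submodule.mapsTo_topologicalClosure_span ?_ hx
  rintro _ ⟨m, k, i, rfl⟩
  cases m with
  | zero => exact ⟨0, k + 1, i, by simp [pow_succ']⟩
  | succ m =>
    refine ⟨m, k, i, ?_⟩
    rw [pow_succ', mul_apply_eq_comp, ← comp_apply (adjoint U) U, hU, one_apply_eq_self]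

def IsDilation (T : H →L[𝕜] H) (J : H →L[𝕜] K) (U : K →L[𝕜] K) : Prop :=
  ∀ n : ℕ, T ^ n = adjoint J ∘L (U ^ n) ∘L J

theorem IsDilation.restrict {T : H →L[𝕜] H} {J : H →ₗᵢ[𝕜] K} {A : K →L[𝕜] K}
    (h : IsDilation T J.toContinuousLinearMap A) {p : Submodule 𝕜 K} [CompleteSpace p]
    (hJ : ∀ x, J x ∈ p) (hA : ∀ x ∈ p, A x ∈ p) :
    IsDilation T (J.codRestrict p hJ).toContinuousLinearMap (A.restrict hA) := fun n ↦ by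
  rw [h n]
  ext x
  refine ext_inner_right 𝕜 fun y ↦ ?_
  simp only [comp_apply, adjoint_inner_left, Submodule.coe_inner, coe_restrict_pow_apply]
  rfl

end Dilation

section Schaeffer

open scoped lp

variable {H : Type*} [NormedAddCommGroup H] [InnerProductSpace ℂ H] [CompleteSpace H]

theorem injective_vecCons_neg_one_zero : Function.Injective ![(-1 : ℤ), 0] := by
  simp [Function.Injective, Fin.forall_fin_two]

noncomputable def schaefferUnitary (T : H →L[ℂ] H) : ℓ²(ℤ, H) →L[ℂ] ℓ²(ℤ, H) :=
  ((lp.reindex (Equiv.subRight 1) : ℓ²(ℤ, H) ≃ₗᵢ[ℂ] ℓ²(ℤ, H)) : ℓ²(ℤ, H) →L[ℂ] ℓ²(ℤ, H)) ∘L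
    lp.extendMatrix ![-1, 0] (halmosMatrix T)

theorem schaefferUnitary_mem_unitary {T : H →L[ℂ] H} (hT : ‖T‖ ≤ 1) :
    schaefferUnitary T ∈ unitary (ℓ²(ℤ, H) →L[ℂ] ℓ²(ℤ, H)) :=
  mul_mem (LinearIsometryEquiv.coe_mem_unitary _)
    (lp.extendMatrix_mem_unitary injective_vecCons_neg_one_zero (halmosMatrix_mem_unitary hT))

theorem schaefferUnitary_apply_of_forall_neg (T : H →L[ℂ] H) {x : ℓ²(ℤ, H)}
    (hx : ∀ n < 0, x n = 0) :
    (∀ n < 0, schaefferUnitary T x n = 0) ∧ schaefferUnitary T x 0 = T (x 0) := by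
  refine ⟨fun n hn ↦ ?_, ?_⟩
  · show lp.extendMatrix ![-1, 0] (halmosMatrix T) x (n - 1) = 0
    rw [lp.extendMatrix_apply_of_notMem _ _ ?_]
    · exact hx _ (by omega)
    · rintro ⟨k, hk⟩
      fin_cases k <;> simp at hk <;> omega
  · show lp.extendMatrix ![-1, 0] (halmosMatrix T) x (0 - 1) = T (x 0)
    simpa [halmosMatrix, Fin.sum_univ_two, hx (-1)] using
      lp.extendMatrix_apply_self injective_vecCons_neg_one_zero (halmosMatrix T) x 0

theorem schaefferUnitary_pow_single (T : H →L[ℂ] H) (h : H) (n : ℕ) :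
    (∀ m < 0, (schaefferUnitary T ^ n) (lp.single 2 0 h) m = 0) ∧
      (schaefferUnitary T ^ n) (lp.single 2 0 h) 0 = (T ^ n) h := by
  induction n with
  | zero =>
    simp only [pow_zero, one_apply_eq_self]
    exact ⟨fun m hm ↦ lp.single_apply_ne _ _ _ hm.ne, lp.single_apply_self _ _ _⟩
  | succ n ih =>
    rw [pow_succ', mul_apply_eq_comp, pow_succ', mul_apply_eq_comp, ← ih.2]
    exact schaefferUnitary_apply_of_forall_neg T ih.1

theorem isDilation_schaefferUnitary (T : H →L[ℂ] H) :
    IsDilation T (lp.singleContinuousLinearMap ℂ (fun _ : ℤ ↦ H) 2 0) (schaefferUnitary T) :=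
  fun n ↦ by
  ext h
  rw [lp.adjoint_singleContinuousLinearMap]
  exact (schaefferUnitary_pow_single T h n).2.symm

end Schaeffer

/-- **Application 2: the Sz.-Nagy minimal unitary dilation of a contraction.**  Every
contraction `T` on a Hilbert space `H` has a minimal unitary dilation `U` on a larger
Hilbert space `K`: `Tⁿ = J† ∘ Uⁿ ∘ J` for all `n`, with `K` spanned by the vectors
`Uᵐ (U†)ᵏ (J h)`. -/
theorem szNagy_unitary_dilation
    {H : Type u} [NormedAddCommGroup H] [InnerProductSpace ℂ H] [CompleteSpace H]
    (T : H →L[ℂ] H) (hT : ‖T‖ ≤ 1) :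
    ∃ (K : Type u) (_ : NormedAddCommGroup K) (_ : InnerProductSpace ℂ K)
      (_ : CompleteSpace K) (J : H →ₗᵢ[ℂ] K) (U : K →L[ℂ] K),
      adjoint U ∘L U = 1 ∧ U ∘L adjoint U = 1 ∧
      (∀ n : ℕ, T ^ n =
        adjoint J.toContinuousLinearMap ∘L (U ^ n) ∘L J.toContinuousLinearMap) ∧
      (Submodule.span ℂ
          {x : K | ∃ (m k : ℕ) (h : H),
            (U ^ m) (((adjoint U) ^ k) (J h)) = x}).topologicalClosure = ⊤ := by
  let J₀ := lp.singleLinearIsometry (𝕜 := ℂ) (E := H) (0 : ℤ)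
  have hU₀ := schaefferUnitary_mem_unitary hT
  have hUK := apply_mem_reducingHull (schaefferUnitary T) J₀
  have hU'K := adjoint_apply_mem_reducingHull (Unitary.star_mul_self_of_mem hU₀) J₀
  let K := reducingHull (schaefferUnitary T) J₀
  let U : K →L[ℂ] K := (schaefferUnitary T).restrict hUK
  let J : H →ₗᵢ[ℂ] K := J₀.codRestrict K (mem_reducingHull _ J₀)
  have hU := restrict_mem_unitary hU₀ hUK hU'K
  have hU₁ : adjoint U ∘L U = 1 := Unitary.star_mul_self_of_mem hU
  have hU₂ : U ∘L adjoint U = 1 := Unitary.mul_star_self_of_mem hU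
  have hdil : IsDilation T J.toContinuousLinearMap U :=
    IsDilation.restrict (J := J₀) (isDilation_schaefferUnitary T) _ hUK
  refine ⟨K, inferInstance, inferInstance, inferInstance, J, U, hU₁, hU₂, hdil, ?_⟩
  rw [adjoint_restrict hUK hU'K]
  refine Submodule.topologicalClosure_span_eq_top_of_le _
    (Submodule.topologicalClosure_mono (Submodule.span_mono ?_))
  rintro _ ⟨m, k, h, rfl⟩
  exact ⟨_, ⟨m, k, h, rfl⟩,
    (coe_restrict_pow_apply hUK m _).trans (congrArg _ (coe_restrict_pow_apply hU'K k _))⟩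
end

section
/- Let H be a complex Hilbert space and T : ℝ → (H →L[ℂ] H) a function such that T 0 = 1, T (s + t) = (T s) ∘ (T t) for all s, t ≥ 0, and ‖T t‖ ≤ 1 for all t ≥ 0. Then there exist a complex Hilbert space K, a linear isometry J : H → K, and a function U : ℝ → (K →L[ℂ] K) such that U 0 = 1, U (s + t) = (U s) ∘ (U t) for all s, t ∈ ℝ, each U t is unitary with (U t)† = U (−t), and T t = J† ∘ (U t) ∘ J for every t ≥ 0. -/
open ContinuousLinearMap
open scoped InnerProductSpace

universe u

/-!
Extend `T` to all of `ℝ` by `S t = (T (-t))†` for `t < 0`. Then `S` is positive definite: the form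
`⟪f, g⟫ = Σ ⟪f s, S (r - s) (g r)⟫` on finitely supported `f, g : ℝ →₀ H` is positive
semidefinite. Indeed, moving the value of `f` at its least support point `a` to the next support
point `b`, replaced by `(T (b - a))† (f a)`, changes `⟪f, f⟫` by `‖f a‖² - ‖(T (b - a))† (f a)‖²`,
which is `≥ 0` since `T (b - a)` is a contraction; induct on the support. Translation preserves the
form, so it extends to a unitary group on the completion `K`; `H` embeds isometrically into `K` as
the functions supported at `0`, and `⟪single 0 x, single t y⟫ = ⟪x, S t y⟫` says that the
compression of the translation by `t` to `H` is `S t`.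
-/

open UniformSpace RCLike
open scoped ComplexConjugate

noncomputable section

section KernelForm

variable {G 𝕜 H : Type*} [AddCommGroup G] [RCLike 𝕜] [NormedAddCommGroup H]
  [InnerProductSpace 𝕜 H]

def kernelForm (S : G → H →L[𝕜] H) (f g : G →₀ H) : 𝕜 :=
  f.sum fun s x => g.sum fun r y => ⟪x, S (r - s) y⟫_𝕜

variable (S : G → H →L[𝕜] H)

theorem kernelForm_single_left (s : G) (x : H) (g : G →₀ H) :
    kernelForm S (.single s x) g = g.sum fun r y => ⟪x, S (r - s) y⟫_𝕜 :=
  Finsupp.sum_single_index (by simp)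

theorem kernelForm_single_single (s r : G) (x y : H) :
    kernelForm S (.single s x) (.single r y) = ⟪x, S (r - s) y⟫_𝕜 := by
  rw [kernelForm_single_left, Finsupp.sum_single_index (by simp)]

theorem kernelForm_add_left (f₁ f₂ g : G →₀ H) :
    kernelForm S (f₁ + f₂) g = kernelForm S f₁ g + kernelForm S f₂ g :=
  Finsupp.sum_add_index' (fun _ => by simp) fun _ _ _ => by
    simp [inner_add_left, Finsupp.sum_add]

theorem kernelForm_add_right (f g₁ g₂ : G →₀ H) :
    kernelForm S f (g₁ + g₂) = kernelForm S f g₁ + kernelForm S f g₂ := by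
  simp only [kernelForm, ← Finsupp.sum_add]
  exact Finsupp.sum_congr fun _ _ =>
    Finsupp.sum_add_index' (fun _ => by simp) fun _ _ _ => by simp [inner_add_right]

theorem kernelForm_smul_left (c : 𝕜) (f g : G →₀ H) :
    kernelForm S (c • f) g = conj c * kernelForm S f g := by
  simp only [kernelForm]
  rw [Finsupp.sum_smul_index' (fun _ => by simp)]
  simp [Finsupp.sum, Finset.mul_sum, inner_smul_left]

theorem kernelForm_equivMapDomain_addRight (t : G) (f g : G →₀ H) :
    kernelForm S (f.equivMapDomain (.addRight t)) (g.equivMapDomain (.addRight t)) =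
      kernelForm S f g := by
  simp only [kernelForm, Finsupp.sum_equivMapDomain, Equiv.coe_addRight, add_sub_add_right_eq_sub]

theorem kernelForm_single_self (h0 : S 0 = 1) (s : G) (x : H) :
    kernelForm S (.single s x) (.single s x) = ⟪x, x⟫_𝕜 := by
  rw [kernelForm_single_single, sub_self, h0, one_apply_eq_self]

variable [CompleteSpace H]

theorem conj_kernelForm (hS : ∀ g, S (-g) = adjoint (S g)) (f g : G →₀ H) :
    conj (kernelForm S g f) = kernelForm S f g := by
  simp only [kernelForm, Finsupp.sum, map_sum]
  rw [Finset.sum_comm]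
  refine Finset.sum_congr rfl fun s _ => Finset.sum_congr rfl fun r _ => ?_
  rw [inner_conj_symm, ← neg_sub, hS, adjoint_inner_left]

end KernelForm

namespace LinearIsometryEquiv

variable {𝕜 E F : Type*} [NormedField 𝕜] [SeminormedAddCommGroup E] [NormedSpace 𝕜 E]
  [SeminormedAddCommGroup F] [NormedSpace 𝕜 F]

def completion (e : E ≃ₗᵢ[𝕜] F) : Completion E ≃ₗᵢ[𝕜] Completion F where
  toLinearMap := (e : E →L[𝕜] F).completion.toLinearMap
  invFun := (e.symm : F →L[𝕜] E).completion
  left_inv x := by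
    change Completion.map e.symm (Completion.map e x) = x
    rw [← Function.comp_apply (f := Completion.map _), Completion.map_comp
      e.symm.isometry.uniformContinuous e.isometry.uniformContinuous, e.symm_comp_self,
      Completion.map_id, id]
  right_inv x := by
    change Completion.map e (Completion.map e.symm x) = x
    rw [← Function.comp_apply (f := Completion.map _), Completion.map_comp
      e.isometry.uniformContinuous e.symm.isometry.uniformContinuous, e.self_comp_symm,
      Completion.map_id, id]
  norm_map' :=
    e.isometry.completion_map.norm_map_of_map_zero (_root_.map_zero (e : E →L[𝕜] F).completion)

@[simp]
theorem completion_coe (e : E ≃ₗᵢ[𝕜] F) (x : E) : e.completion x = e x :=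
  completion_apply_coe _ x

theorem completion_refl : (refl 𝕜 E).completion = refl 𝕜 (Completion E) := by
  ext x
  induction x using Completion.induction_on with
  | hp => exact isClosed_eq (by fun_prop) continuous_id
  | ih a => simp

theorem completion_trans {F' : Type*} [SeminormedAddCommGroup F'] [NormedSpace 𝕜 F']
    (e : E ≃ₗᵢ[𝕜] F) (e' : F ≃ₗᵢ[𝕜] F') :
    (e.trans e').completion = e.completion.trans e'.completion := by
  ext x
  induction x using Completion.induction_on with
  | hp => exact isClosed_eq (by fun_prop) (by fun_prop)
  | ih a => simp

theorem completion_symm (e : E ≃ₗᵢ[𝕜] F) : e.symm.completion = e.completion.symm := rfl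

end LinearIsometryEquiv

structure PosDefOpFun (G 𝕜 H : Type*) [AddCommGroup G] [RCLike 𝕜] [NormedAddCommGroup H]
    [InnerProductSpace 𝕜 H] [CompleteSpace H] where
  toFun : G → H →L[𝕜] H
  map_neg' : ∀ g, toFun (-g) = adjoint (toFun g)
  re_kernelForm_self_nonneg' : ∀ f, 0 ≤ re (kernelForm toFun f f)

namespace PosDefOpFun

variable {G 𝕜 H : Type*} [AddCommGroup G] [RCLike 𝕜] [NormedAddCommGroup H]
  [InnerProductSpace 𝕜 H] [CompleteSpace H]

instance : CoeFun (PosDefOpFun G 𝕜 H) fun _ => G → H →L[𝕜] H := ⟨toFun⟩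

variable (S : PosDefOpFun G 𝕜 H)

/-- The inner product below may be degenerate; `Completion` identifies vectors at distance zero,
so no separate quotient by null vectors is needed. -/
def PreHilbert (_ : PosDefOpFun G 𝕜 H) : Type _ := G →₀ H

instance : AddCommGroup S.PreHilbert := inferInstanceAs (AddCommGroup (G →₀ H))

instance : Module 𝕜 S.PreHilbert := inferInstanceAs (Module 𝕜 (G →₀ H))

@[reducible]
def core : PreInnerProductSpace.Core 𝕜 S.PreHilbert where
  inner := kernelForm S
  conj_inner_symm := conj_kernelForm S S.map_neg'
  re_inner_nonneg := S.re_kernelForm_self_nonneg'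
  add_left := kernelForm_add_left S
  smul_left f g c := kernelForm_smul_left S c f g

instance : SeminormedAddCommGroup S.PreHilbert :=
  @InnerProductSpace.Core.toSeminormedAddCommGroup 𝕜 _ _ _ _ S.core

instance : InnerProductSpace 𝕜 S.PreHilbert := InnerProductSpace.ofCore S.core

theorem inner_eq_kernelForm (f g : S.PreHilbert) : ⟪f, g⟫_𝕜 = kernelForm S f g := rfl

def translate (t : G) : S.PreHilbert ≃ₗᵢ[𝕜] S.PreHilbert where
  toLinearEquiv := Finsupp.domLCongr (Equiv.addRight t)
  norm_map' f := by
    simp only [norm_eq_sqrt_re_inner (𝕜 := 𝕜), inner_eq_kernelForm]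
    congr 2
    exact kernelForm_equivMapDomain_addRight S t f f

theorem translate_toLinearEquiv (t : G) :
    (S.translate t).toLinearEquiv = Finsupp.domLCongr (Equiv.addRight t) := rfl

theorem translate_zero : S.translate 0 = .refl 𝕜 S.PreHilbert :=
  LinearIsometryEquiv.toLinearEquiv_injective <| by
    rw [translate_toLinearEquiv, Equiv.addRight_zero, Equiv.Perm.one_def, Finsupp.domLCongr_refl]
    rfl

theorem translate_add (s t : G) : S.translate (s + t) = (S.translate s).trans (S.translate t) :=
  LinearIsometryEquiv.toLinearEquiv_injective <| by
    rw [translate_toLinearEquiv, Equiv.addRight_add, Equiv.Perm.mul_def,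
      ← Finsupp.domLCongr_trans]
    rfl

theorem translate_symm (t : G) : (S.translate t).symm = S.translate (-t) :=
  LinearIsometryEquiv.toLinearEquiv_injective <| by
    rw [translate_toLinearEquiv, ← Equiv.addRight_symm, ← Finsupp.domLCongr_symm]
    rfl

def unitaryGroup (t : G) : Completion S.PreHilbert →L[𝕜] Completion S.PreHilbert :=
  (S.translate t).completion

theorem unitaryGroup_coe (t : G) (f : S.PreHilbert) : S.unitaryGroup t f = S.translate t f :=
  LinearIsometryEquiv.completion_coe _ f

theorem unitaryGroup_zero : S.unitaryGroup 0 = 1 := by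
  ext x
  simp [unitaryGroup, translate_zero, LinearIsometryEquiv.completion_refl]

theorem unitaryGroup_add (s t : G) :
    S.unitaryGroup (s + t) = S.unitaryGroup s ∘L S.unitaryGroup t := by
  ext x
  simp [unitaryGroup, add_comm s, translate_add, LinearIsometryEquiv.completion_trans]

theorem adjoint_unitaryGroup (t : G) : adjoint (S.unitaryGroup t) = S.unitaryGroup (-t) := by
  rw [unitaryGroup, LinearIsometryEquiv.adjoint_eq_symm, ← LinearIsometryEquiv.completion_symm,
    translate_symm, unitaryGroup]

theorem adjoint_unitaryGroup_comp_self (t : G) :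
    adjoint (S.unitaryGroup t) ∘L S.unitaryGroup t = 1 := by
  rw [adjoint_unitaryGroup, ← unitaryGroup_add, neg_add_cancel, unitaryGroup_zero]

theorem unitaryGroup_comp_adjoint_self (t : G) :
    S.unitaryGroup t ∘L adjoint (S.unitaryGroup t) = 1 := by
  rw [adjoint_unitaryGroup, ← unitaryGroup_add, add_neg_cancel, unitaryGroup_zero]

def singleₗ (s : G) : H →ₗ[𝕜] S.PreHilbert := Finsupp.lsingle s

theorem inner_singleₗ (s r : G) (x y : H) :
    ⟪S.singleₗ s x, S.singleₗ r y⟫_𝕜 = ⟪x, S (r - s) y⟫_𝕜 :=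
  kernelForm_single_single S s r x y

theorem translate_singleₗ (t s : G) (x : H) :
    S.translate t (S.singleₗ s x) = S.singleₗ (s + t) x :=
  Finsupp.domLCongr_single _ s x

def embedding (h0 : S 0 = 1) : H →ₗᵢ[𝕜] Completion S.PreHilbert :=
  Completion.toComplₗᵢ.comp
    { toLinearMap := S.singleₗ 0
      norm_map' x := by
        rw [norm_eq_sqrt_re_inner (𝕜 := 𝕜), inner_singleₗ, sub_self, h0, one_apply_eq_self,
          ← norm_eq_sqrt_re_inner] }

theorem embedding_apply (h0 : S 0 = 1) (x : H) : S.embedding h0 x = S.singleₗ 0 x := rfl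

theorem adjoint_embedding_comp_unitaryGroup_comp_embedding (h0 : S 0 = 1) (t : G) :
    adjoint (S.embedding h0).toContinuousLinearMap ∘L S.unitaryGroup t ∘L
      (S.embedding h0).toContinuousLinearMap = S t := by
  ext x
  refine ext_inner_left 𝕜 fun v => ?_
  simp only [comp_apply, adjoint_inner_right, LinearIsometry.coe_toContinuousLinearMap,
    embedding_apply, unitaryGroup_coe, translate_singleₗ, Completion.inner_coe, inner_singleₗ,
    zero_add, sub_zero]

end PosDefOpFun

section ContractionSemigroup

variable {G 𝕜 H : Type*} [AddCommGroup G] [LinearOrder G] [RCLike 𝕜]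
  [NormedAddCommGroup H] [InnerProductSpace 𝕜 H] [CompleteSpace H] {T : G → H →L[𝕜] H}

def adjointExtension (T : G → H →L[𝕜] H) (t : G) : H →L[𝕜] H :=
  if 0 ≤ t then T t else adjoint (T (-t))

theorem adjointExtension_of_nonneg {t : G} (ht : 0 ≤ t) : adjointExtension T t = T t :=
  if_pos ht

theorem adjointExtension_zero (hT0 : T 0 = 1) : adjointExtension T 0 = 1 :=
  (adjointExtension_of_nonneg le_rfl).trans hT0

variable [IsOrderedAddMonoid G]

theorem adjointExtension_neg (hT0 : IsSelfAdjoint (T 0)) (t : G) :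
    adjointExtension T (-t) = adjoint (adjointExtension T t) := by
  rcases lt_trichotomy t 0 with ht | rfl | ht
  · rw [adjointExtension_of_nonneg (neg_nonneg.2 ht.le), adjointExtension,
      if_neg ht.not_ge, adjoint_adjoint]
  · rw [neg_zero, adjointExtension_of_nonneg le_rfl, hT0.adjoint_eq]
  · rw [adjointExtension, if_neg (neg_neg_iff_pos.2 ht).not_ge, neg_neg,
      adjointExtension_of_nonneg ht.le]

theorem kernelForm_adjointExtension_single_left
    (hTadd : ∀ s t, 0 ≤ s → 0 ≤ t → T (s + t) = T s ∘L T t) {a b : G} (hab : a ≤ b) (x : H)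
    {f : G →₀ H} (hf : ∀ r ∈ f.support, b ≤ r) :
    kernelForm (adjointExtension T) (.single a x) f =
      kernelForm (adjointExtension T) (.single b (adjoint (T (b - a)) x)) f := by
  rw [kernelForm_single_left, kernelForm_single_left]
  refine Finsupp.sum_congr fun r hr => ?_
  have hbr := hf r hr
  rw [adjointExtension_of_nonneg (sub_nonneg.2 (hab.trans hbr)),
    adjointExtension_of_nonneg (sub_nonneg.2 hbr), adjoint_inner_left, ← comp_apply,
    ← hTadd _ _ (sub_nonneg.2 hab) (sub_nonneg.2 hbr), sub_add_sub_cancel']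

theorem kernelForm_adjointExtension_single_add_self (hT0 : T 0 = 1)
    (hTadd : ∀ s t, 0 ≤ s → 0 ≤ t → T (s + t) = T s ∘L T t) {a b : G} (hab : a ≤ b) (x : H)
    {g : G →₀ H} (hg : ∀ r ∈ g.support, b ≤ r) :
    kernelForm (adjointExtension T) (.single a x + g) (.single a x + g) =
      kernelForm (adjointExtension T) (g + .single b (adjoint (T (b - a)) x))
          (g + .single b (adjoint (T (b - a)) x)) +
        (⟪x, x⟫_𝕜 - ⟪adjoint (T (b - a)) x, adjoint (T (b - a)) x⟫_𝕜) := by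
  set u := adjoint (T (b - a)) x
  have hself := kernelForm_single_self _ (adjointExtension_zero hT0)
  have hleft := kernelForm_adjointExtension_single_left hTadd hab x hg
  have hright : kernelForm (adjointExtension T) g (.single a x) =
      kernelForm (adjointExtension T) g (.single b u) := by
    have hconj := conj_kernelForm (adjointExtension T)
      (adjointExtension_neg (hT0 ▸ IsSelfAdjoint.one (H →L[𝕜] H)))
    rw [← hconj, hleft, hconj]
  simp only [kernelForm_add_left, kernelForm_add_right, hself, hleft, hright]
  ring

theorem re_kernelForm_adjointExtension_self_nonneg (hT0 : T 0 = 1)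
    (hTadd : ∀ s t, 0 ≤ s → 0 ≤ t → T (s + t) = T s ∘L T t) (hTnorm : ∀ t, 0 ≤ t → ‖T t‖ ≤ 1)
    (f : G →₀ H) : 0 ≤ re (kernelForm (adjointExtension T) f f) := by
  classical
  suffices ∀ s : Finset G, ∀ f : G →₀ H, f.support ⊆ s →
      0 ≤ re (kernelForm (adjointExtension T) f f) from this _ f subset_rfl
  intro s
  induction s using Finset.induction_on_min with
  | empty =>
    intro f hf
    simp [Finsupp.support_eq_empty.1 (Finset.subset_empty.1 hf), kernelForm]
  | insert a s has ih =>
    intro f hf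
    have hg : (f.erase a).support ⊆ s := by
      rw [Finsupp.support_erase]
      exact Finset.subset_insert_iff.1 hf
    rw [← Finsupp.single_add_erase a f]
    rcases s.eq_empty_or_nonempty with rfl | hs
    · rw [Finsupp.support_eq_empty.1 (Finset.subset_empty.1 hg), add_zero,
        kernelForm_single_self _ (adjointExtension_zero hT0)]
      exact inner_self_nonneg
    · set b := s.min' hs
      have hab : a ≤ b := (has b (s.min'_mem hs)).le
      have hgb : ∀ r ∈ (f.erase a).support, b ≤ r := fun r hr => s.min'_le r (hg hr)
      set u := adjoint (T (b - a)) (f a)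
      have hu : ‖u‖ ≤ ‖f a‖ := by
        refine (le_opNorm _ _).trans (mul_le_of_le_one_left (norm_nonneg _) ?_)
        rw [LinearIsometryEquiv.norm_map]
        exact hTnorm _ (sub_nonneg.2 hab)
      have hsupp : (f.erase a + .single b u).support ⊆ s :=
        Finsupp.support_add.trans <| Finset.union_subset hg <|
          Finsupp.support_single_subset.trans (Finset.singleton_subset_iff.2 (s.min'_mem hs))
      rw [kernelForm_adjointExtension_single_add_self hT0 hTadd hab _ hgb, map_add, map_sub,
        inner_self_eq_norm_sq, inner_self_eq_norm_sq]
      have := ih _ hsupp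
      nlinarith [norm_nonneg u]

def PosDefOpFun.ofContractionSemigroup (hT0 : T 0 = 1)
    (hTadd : ∀ s t, 0 ≤ s → 0 ≤ t → T (s + t) = T s ∘L T t)
    (hTnorm : ∀ t, 0 ≤ t → ‖T t‖ ≤ 1) : PosDefOpFun G 𝕜 H where
  toFun := adjointExtension T
  map_neg' := adjointExtension_neg (hT0 ▸ IsSelfAdjoint.one (H →L[𝕜] H))
  re_kernelForm_self_nonneg' := re_kernelForm_adjointExtension_self_nonneg hT0 hTadd hTnorm

end ContractionSemigroup

end

/-- **Application 3: dilation of a one-parameter semigroup of contractions.**  A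
contraction semigroup `(T t)_{t ≥ 0}` on a Hilbert space `H` dilates to a one-parameter
group `(U t)_{t ∈ ℝ}` of unitary operators on a larger Hilbert space `K`, with
`T t = J† ∘ U t ∘ J` for all `t ≥ 0`. -/
theorem contraction_semigroup_unitary_dilation
    {H : Type u} [NormedAddCommGroup H] [InnerProductSpace ℂ H] [CompleteSpace H]
    (T : ℝ → (H →L[ℂ] H))
    (hT0 : T 0 = 1)
    (hTadd : ∀ s t : ℝ, 0 ≤ s → 0 ≤ t → T (s + t) = T s ∘L T t)
    (hTnorm : ∀ t : ℝ, 0 ≤ t → ‖T t‖ ≤ 1) :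
    ∃ (K : Type u) (_ : NormedAddCommGroup K) (_ : InnerProductSpace ℂ K)
      (_ : CompleteSpace K) (J : H →ₗᵢ[ℂ] K) (U : ℝ → (K →L[ℂ] K)),
      U 0 = 1 ∧
      (∀ s t : ℝ, U (s + t) = U s ∘L U t) ∧
      (∀ t : ℝ, adjoint (U t) = U (-t) ∧
        adjoint (U t) ∘L U t = 1 ∧ U t ∘L adjoint (U t) = 1) ∧
      (∀ t : ℝ, 0 ≤ t →
        T t = adjoint J.toContinuousLinearMap ∘L U t ∘L J.toContinuousLinearMap) := by
  let S : PosDefOpFun ℝ ℂ H := .ofContractionSemigroup hT0 hTadd hTnorm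
  have hS0 : S 0 = 1 := adjointExtension_zero hT0
  refine ⟨Completion S.PreHilbert, inferInstance, inferInstance, inferInstance, S.embedding hS0,
    S.unitaryGroup, S.unitaryGroup_zero, S.unitaryGroup_add, fun t =>
      ⟨S.adjoint_unitaryGroup t, S.adjoint_unitaryGroup_comp_self t,
        S.unitaryGroup_comp_adjoint_self t⟩, fun t ht => ?_⟩
  rw [S.adjoint_embedding_comp_unitaryGroup_comp_embedding hS0]
  exact (adjointExtension_of_nonneg ht).symm
end
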